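/- arXiv:0908.2056 — 3 statements merged into one kernel-verified Lean document; each statement's English description precedes it below -/
import Mathlib

section
/- In the Kesten-Stigum phase bλ² > 1, the second moments of S_n are uniformly bounded: there exists a constant C = C(M) < ∞ such that max_i E[S_n² | ξ_ρ = i] ≤ C for all n ≥ 0. -/
/-!
Given the root label `i`, the subtrees below the `b` children of the root are independent copies of
the chain whose root label is drawn from `M i ·`. Hence, writing `Z_n(i)` for the conditional
second moment of `∑_{x ∈ L_n} σ_x`, the second moment of a sum of `b` i.i.d. summands and
`M ν = λ ν` give `Z_{n+1}(i) = b ∑_j M i j Z_n(j) + (b² - b) (λ (bλ)^n ν_i)²`. With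
`K = ∑_j ν_j²` and `r = bλ² > 1`, the constant `C = K r / (r - 1)` solves
`b C + (bλ)² K = (bλ)² C`, so the recursion preserves `Z_n ≤ (bλ)^{2n} C`, which is
`E[S_n² | ξ_ρ = i] ≤ C`.
-/

open MeasureTheory ProbabilityTheory Finset
open scoped ENNReal

section ProductWeights

variable {ι γ : Type*} [Fintype ι] [DecidableEq ι] [Fintype γ] {w : γ → ℝ}

theorem sum_prod_mul_prod (w : γ → ℝ) (t : ι → γ → ℝ) :
    ∑ g : ι → γ, (∏ i, w (g i)) * ∏ i, t i (g i) = ∏ i, ∑ h, w h * t i h := by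
  simp only [Fintype.prod_sum, prod_mul_distrib]

theorem sum_prod_mul_apply_mul_apply (hw : ∑ h, w h = 1) (s : γ → ℝ) {a a' : ι} (h : a ≠ a') :
    ∑ g : ι → γ, (∏ i, w (g i)) * (s (g a) * s (g a')) = (∑ h, w h * s h) ^ 2 := by
  have key := sum_prod_mul_prod w fun i h =>
    (if i = a then s h else 1) * (if i = a' then s h else 1)
  have factor : ∀ i, ∑ h, w h * ((if i = a then s h else 1) * (if i = a' then s h else 1))
      = (if i = a then ∑ h, w h * s h else 1) * (if i = a' then ∑ h, w h * s h else 1) := by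
    intro i
    by_cases hia : i = a <;> by_cases hia' : i = a' <;> simp_all
  simp only [prod_mul_distrib, prod_ite_eq', mem_univ, if_true, factor] at key
  rw [key, sq]

theorem sum_prod_mul_apply (hw : ∑ h, w h = 1) (s : γ → ℝ) (a : ι) :
    ∑ g : ι → γ, (∏ i, w (g i)) * s (g a) = ∑ h, w h * s h := by
  have key := sum_prod_mul_prod w fun i h => if i = a then s h else 1
  have factor : ∀ i,
      ∑ h, w h * (if i = a then s h else 1) = if i = a then ∑ h, w h * s h else 1 := by
    intro i
    split_ifs <;> simp [hw]
  simp only [prod_ite_eq', mem_univ, if_true, factor] at key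
  exact key

theorem sum_prod_mul_sum (hw : ∑ h, w h = 1) (s : γ → ℝ) :
    ∑ g : ι → γ, (∏ i, w (g i)) * ∑ i, s (g i) = Fintype.card ι * ∑ h, w h * s h := by
  simp only [mul_sum]
  rw [sum_comm]
  simp [sum_prod_mul_apply hw, ← mul_sum]

theorem sum_prod_mul_sum_sq (hw : ∑ h, w h = 1) (s : γ → ℝ) :
    ∑ g : ι → γ, (∏ i, w (g i)) * (∑ i, s (g i)) ^ 2
      = Fintype.card ι * ∑ h, w h * s h ^ 2
        + ((Fintype.card ι) ^ 2 - Fintype.card ι) * (∑ h, w h * s h) ^ 2 := by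
  have pair : ∀ a a' : ι, ∑ g : ι → γ, (∏ i, w (g i)) * (s (g a) * s (g a'))
      = (if a = a' then ∑ h, w h * s h ^ 2 - (∑ h, w h * s h) ^ 2 else 0)
        + (∑ h, w h * s h) ^ 2 := by
    intro a a'
    split_ifs with h
    · have := sum_prod_mul_apply hw (fun h => s h ^ 2) a
      simp only [h, sq] at this ⊢
      rw [this]
      ring
    · rw [sum_prod_mul_apply_mul_apply hw s h, zero_add]
  calc ∑ g : ι → γ, (∏ i, w (g i)) * (∑ i, s (g i)) ^ 2
      = ∑ a, ∑ a', ∑ g : ι → γ, (∏ i, w (g i)) * (s (g a) * s (g a')) := by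
        simp only [sq, sum_mul_sum]
        simp only [mul_sum]
        rw [sum_comm]
        exact sum_congr rfl fun a _ => sum_comm
    _ = _ := by
        simp only [pair, sum_add_distrib, sum_ite_eq, mem_univ, if_true, sum_const, card_univ,
          nsmul_eq_mul]
        ring
end ProductWeights

def TreeConfig (b k n : ℕ) : Type := ∀ m : Fin (n + 1), (Fin m → Fin b) → Fin k

namespace TreeConfig

variable {b k n : ℕ}

instance : Fintype (TreeConfig b k n) :=
  inferInstanceAs (Fintype (∀ m : Fin (n + 1), (Fin m → Fin b) → Fin k))

def root (c : TreeConfig b k n) : Fin k := c 0 Fin.elim0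

-- Levels beyond `n` get the root label; only levels `≤ n` are ever read.
def extend (c : TreeConfig b k n) (m : ℕ) : (Fin m → Fin b) → Fin k :=
  if h : m < n + 1 then c ⟨m, h⟩ else fun _ => c.root

theorem extend_of_lt (c : TreeConfig b k n) {m : ℕ} (h : m < n + 1) (x : Fin m → Fin b) :
    c.extend m x = c ⟨m, h⟩ x := by
  simp [extend, h]

theorem extend_zero (c : TreeConfig b k n) (x : Fin 0 → Fin b) : c.extend 0 x = c.root := by
  rw [extend_of_lt c n.succ_pos, Subsingleton.elim x Fin.elim0]
  rfl

def ofRoot (i : Fin k) : TreeConfig b k 0 := fun _ _ => i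

theorem eq_ofRoot_root (c : TreeConfig b k 0) : c = ofRoot c.root := by
  funext m x
  obtain rfl := Fin.fin_one_eq_zero m
  exact congrArg (c 0) (funext fun i => Fin.elim0 i)

def subtree (a : Fin b) (c : TreeConfig b k (n + 1)) : TreeConfig b k n :=
  fun m y => c m.succ (Fin.cons a y)

def graft (j : Fin k) (g : Fin b → TreeConfig b k n) : TreeConfig b k (n + 1) :=
  Fin.cases (motive := fun m : Fin (n + 2) => (Fin m → Fin b) → Fin k)
    (fun _ => j) (fun m (x : Fin (m + 1) → Fin b) => g (x 0) m (Fin.tail x))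

theorem root_graft (j : Fin k) (g : Fin b → TreeConfig b k n) : (graft j g).root = j := rfl

theorem subtree_graft (j : Fin k) (g : Fin b → TreeConfig b k n) (a : Fin b) :
    (graft j g).subtree a = g a :=
  rfl

theorem graft_root_subtree (c : TreeConfig b k (n + 1)) :
    graft c.root (fun a => c.subtree a) = c := by
  funext m x
  induction m using Fin.cases with
  | zero => exact congrArg (c 0) (Subsingleton.elim Fin.elim0 x)
  | succ m => exact congrArg (c m.succ) (Fin.cons_self_tail x)

def graftEquiv : Fin k × (Fin b → TreeConfig b k n) ≃ TreeConfig b k (n + 1) where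
  toFun p := graft p.1 p.2
  invFun c := (c.root, fun a => c.subtree a)
  left_inv p := Prod.ext (root_graft p.1 p.2) (funext (subtree_graft p.1 p.2))
  right_inv := graft_root_subtree

theorem extend_graft_succ (j : Fin k) (g : Fin b → TreeConfig b k n) {m : ℕ} (h : m < n + 1)
    (x : Fin (m + 1) → Fin b) :
    (graft j g).extend (m + 1) x = (g (x 0)).extend m (Fin.tail x) := by
  rw [extend_of_lt _ (by omega), extend_of_lt _ h]
  rfl

end TreeConfig

section TreeFunctionals

open TreeConfig

variable {b k n : ℕ}

def treeWeight (M : Matrix (Fin k) (Fin k) ℝ) (n : ℕ) (f : (m : ℕ) → (Fin m → Fin b) → Fin k) :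
    ℝ :=
  ∏ m ∈ range n, ∏ x : Fin (m + 1) → Fin b, M (f m (x ∘ Fin.castSucc)) (f (m + 1) x)

def levelSum (ν : Fin k → ℝ) (n : ℕ) (f : (m : ℕ) → (Fin m → Fin b) → Fin k) : ℝ :=
  ∑ x : Fin n → Fin b, ν (f n x)

theorem treeWeight_nonneg {M : Matrix (Fin k) (Fin k) ℝ} (hM : ∀ i j, 0 ≤ M i j) (n : ℕ)
    (f : (m : ℕ) → (Fin m → Fin b) → Fin k) : 0 ≤ treeWeight M n f :=
  prod_nonneg fun _ _ => prod_nonneg fun _ _ => hM _ _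

theorem treeWeight_extend_graft (M : Matrix (Fin k) (Fin k) ℝ) (j : Fin k)
    (g : Fin b → TreeConfig b k n) :
    treeWeight M (n + 1) (graft j g).extend
      = ∏ a, M j (g a).root * treeWeight M n (g a).extend := by
  have top : ∏ x : Fin 1 → Fin b, M ((graft j g).extend 0 (x ∘ Fin.castSucc))
      ((graft j g).extend 1 x) = ∏ a, M j (g a).root := by
    rw [← (Equiv.funUnique (Fin 1) (Fin b)).symm.prod_comp]
    refine prod_congr rfl fun a _ => ?_
    rw [extend_zero, root_graft, extend_graft_succ _ _ n.succ_pos, extend_zero]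
    rfl
  have below : ∀ m ∈ range n, ∏ x : Fin (m + 2) → Fin b,
      M ((graft j g).extend (m + 1) (x ∘ Fin.castSucc)) ((graft j g).extend (m + 2) x)
        = ∏ a, ∏ y : Fin (m + 1) → Fin b,
            M ((g a).extend m (y ∘ Fin.castSucc)) ((g a).extend (m + 1) y) := by
    intro m hm
    have hm : m < n := mem_range.mp hm
    rw [← (Fin.consEquiv fun _ => Fin b).prod_comp, Fintype.prod_prod_type]
    refine prod_congr rfl fun a _ => prod_congr rfl fun y _ => ?_
    rw [extend_graft_succ _ _ (by omega), extend_graft_succ _ _ (by omega)]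
    rfl
  rw [treeWeight, prod_range_succ', prod_congr rfl below, top, prod_comm, ← prod_mul_distrib]
  exact prod_congr rfl fun a _ => mul_comm _ _

theorem levelSum_extend_graft (ν : Fin k → ℝ) (j : Fin k) (g : Fin b → TreeConfig b k n) :
    levelSum ν (n + 1) (graft j g).extend = ∑ a, levelSum ν n (g a).extend := by
  rw [levelSum, ← (Fin.consEquiv fun _ => Fin b).sum_comp, Fintype.sum_prod_type]
  refine sum_congr rfl fun a _ => sum_congr rfl fun y _ => ?_
  rw [extend_graft_succ _ _ n.lt_succ_self]
  rfl

theorem levelSum_extend_ofRoot (ν : Fin k → ℝ) (i : Fin k) :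
    levelSum ν 0 (ofRoot (b := b) i).extend = ν i := by
  simp only [levelSum, univ_unique, extend_zero, sum_const, card_singleton, one_smul]
  rfl

end TreeFunctionals

section RootLaw

open TreeConfig

variable {b k : ℕ} (M : Matrix (Fin k) (Fin k) ℝ)

def rootLaw {n : ℕ} (i : Fin k) (c : TreeConfig b k n) : ℝ :=
  if c.root = i then treeWeight M n c.extend else 0

def childLaw {n : ℕ} (i : Fin k) (c : TreeConfig b k n) : ℝ :=
  M i c.root * treeWeight M n c.extend

theorem sum_rootLaw_mul_zero (i : Fin k) (F : TreeConfig b k 0 → ℝ) :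
    ∑ c, rootLaw M i c * F c = F (ofRoot i) := by
  rw [sum_eq_single (ofRoot i)]
  · simp [rootLaw, root, ofRoot, treeWeight]
  · intro c _ hc
    have hroot : c.root ≠ i := fun h => hc (h ▸ eq_ofRoot_root c)
    simp [rootLaw, hroot]
  · simp

theorem sum_rootLaw_mul_succ {n : ℕ} (i : Fin k) (F : TreeConfig b k (n + 1) → ℝ) :
    ∑ c, rootLaw M i c * F c
      = ∑ g : Fin b → TreeConfig b k n, (∏ a, childLaw M i (g a)) * F (graft i g) := by
  rw [← graftEquiv.sum_comp, Fintype.sum_prod_type]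
  simp only [graftEquiv, Equiv.coe_fn_mk, rootLaw, root_graft, treeWeight_extend_graft, ite_mul,
    zero_mul, sum_ite_irrel, sum_const_zero, sum_ite_eq', mem_univ, if_true, childLaw]

theorem sum_childLaw_mul {n : ℕ} (i : Fin k) (F : TreeConfig b k n → ℝ) :
    ∑ c, childLaw M i c * F c = ∑ j, M i j * ∑ c, rootLaw M j c * F c := by
  simp only [mul_sum, rootLaw, mul_ite, ite_mul, mul_zero, zero_mul]
  rw [sum_comm]
  refine sum_congr rfl fun c _ => ?_
  rw [sum_ite_eq]
  simp [childLaw, mul_assoc]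

end RootLaw

theorem rootLaw_nonneg {b k n : ℕ} {M : Matrix (Fin k) (Fin k) ℝ} (hM0 : ∀ i j, 0 ≤ M i j)
    (i : Fin k) (c : TreeConfig b k n) : 0 ≤ rootLaw M i c := by
  unfold rootLaw
  split_ifs
  exacts [treeWeight_nonneg hM0 n _, le_rfl]

theorem sum_mul_eq_of_mulVec_eq_smul {k : ℕ} {M : Matrix (Fin k) (Fin k) ℝ} {v : Fin k → ℝ}
    {c : ℝ} (h : M.mulVec v = c • v) (i : Fin k) : ∑ j, M i j * v j = c * v i := by
  simpa [Matrix.mulVec, dotProduct] using congrFun h i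

section Moments

open TreeConfig

variable {b k : ℕ} {M : Matrix (Fin k) (Fin k) ℝ} {ν : Fin k → ℝ} {lam : ℝ}

theorem sum_rootLaw (hM1 : ∀ i, ∑ j, M i j = 1) :
    ∀ (n : ℕ) (i : Fin k), ∑ c : TreeConfig b k n, rootLaw M i c = 1
  | 0, i => by simpa using sum_rootLaw_mul_zero M i fun _ => 1
  | n + 1, i => by
    have hchild : ∑ c : TreeConfig b k n, childLaw M i c = 1 := by
      simpa [sum_rootLaw hM1 n, hM1 i] using sum_childLaw_mul M i fun (_ : TreeConfig b k n) => 1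
    simpa [← Fintype.prod_sum, hchild] using
      sum_rootLaw_mul_succ M i fun (_ : TreeConfig b k (n + 1)) => 1

theorem sum_childLaw (hM1 : ∀ i, ∑ j, M i j = 1) (n : ℕ) (i : Fin k) :
    ∑ c : TreeConfig b k n, childLaw M i c = 1 := by
  simpa [sum_rootLaw hM1 n, hM1 i] using sum_childLaw_mul M i fun (_ : TreeConfig b k n) => 1

theorem sum_rootLaw_mul_levelSum (hM1 : ∀ i, ∑ j, M i j = 1) (heig : M.mulVec ν = lam • ν) :
    ∀ (n : ℕ) (i : Fin k),
      ∑ c : TreeConfig b k n, rootLaw M i c * levelSum ν n c.extend = (b * lam) ^ n * ν i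
  | 0, i => by simp [sum_rootLaw_mul_zero, levelSum_extend_ofRoot]
  | n + 1, i => by
    simp only [sum_rootLaw_mul_succ, levelSum_extend_graft]
    rw [sum_prod_mul_sum (sum_childLaw hM1 n i) fun c => levelSum ν n c.extend, sum_childLaw_mul]
    simp only [sum_rootLaw_mul_levelSum hM1 heig n, Fintype.card_fin, mul_left_comm (M i _),
      ← mul_sum, sum_mul_eq_of_mulVec_eq_smul heig]
    ring

theorem sum_rootLaw_mul_levelSum_sq_succ (hM1 : ∀ i, ∑ j, M i j = 1) (heig : M.mulVec ν = lam • ν)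
    (n : ℕ) (i : Fin k) :
    ∑ c : TreeConfig b k (n + 1), rootLaw M i c * levelSum ν (n + 1) c.extend ^ 2
      = b * ∑ j, M i j * ∑ c : TreeConfig b k n, rootLaw M j c * levelSum ν n c.extend ^ 2
        + ((b : ℝ) ^ 2 - b) * ((b * lam) ^ n * (lam * ν i)) ^ 2 := by
  simp only [sum_rootLaw_mul_succ, levelSum_extend_graft]
  rw [sum_prod_mul_sum_sq (sum_childLaw hM1 n i) fun c => levelSum ν n c.extend, sum_childLaw_mul,
    sum_childLaw_mul]
  simp only [sum_rootLaw_mul_levelSum hM1 heig n, Fintype.card_fin, mul_left_comm (M i _),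
    ← mul_sum, sum_mul_eq_of_mulVec_eq_smul heig]

theorem sum_rootLaw_mul_levelSum_sq_le (hM0 : ∀ i j, 0 ≤ M i j) (hM1 : ∀ i, ∑ j, M i j = 1)
    (heig : M.mulVec ν = lam • ν) (hKS : 1 < (b : ℝ) * lam ^ 2) (n : ℕ) (i : Fin k) :
    ∑ c : TreeConfig b k n, rootLaw M i c * levelSum ν n c.extend ^ 2
      ≤ (((b : ℝ) * lam) ^ 2) ^ n * ((∑ j, ν j ^ 2) * (b * lam ^ 2) / (b * lam ^ 2 - 1)) := by
  set K := ∑ j, ν j ^ 2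
  set C := K * (b * lam ^ 2) / (b * lam ^ 2 - 1)
  have hν : ∀ j, ν j ^ 2 ≤ K := fun j => single_le_sum (fun j _ => sq_nonneg (ν j)) (mem_univ j)
  have hKC : K ≤ C := by
    rw [le_div_iff₀ (by linarith)]
    nlinarith [sum_nonneg fun j (_ : j ∈ univ) => sq_nonneg (ν j)]
  have hfix : b * C + ((b : ℝ) * lam) ^ 2 * K = ((b : ℝ) * lam) ^ 2 * C := by
    simp only [C]
    field_simp [(by linarith : (b : ℝ) * lam ^ 2 - 1 ≠ 0)]
    ring
  induction n generalizing i with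
  | zero => simpa [sum_rootLaw_mul_zero, levelSum_extend_ofRoot] using (hν i).trans hKC
  | succ n ih =>
    have hmix : ∑ j, M i j * ∑ c : TreeConfig b k n, rootLaw M j c * levelSum ν n c.extend ^ 2
        ≤ (((b : ℝ) * lam) ^ 2) ^ n * C := by
      calc _ ≤ ∑ j, M i j * ((((b : ℝ) * lam) ^ 2) ^ n * C) :=
            sum_le_sum fun j _ => mul_le_mul_of_nonneg_left (ih j) (hM0 i j)
        _ = _ := by rw [← sum_mul, hM1, one_mul]
    have hnew : ((b : ℝ) ^ 2 - b) * ((b * lam) ^ n * (lam * ν i)) ^ 2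
        ≤ (((b : ℝ) * lam) ^ 2) ^ n * (((b : ℝ) * lam) ^ 2 * K) := by
      rw [mul_pow _ (lam * ν i), ← pow_mul, mul_comm n 2, pow_mul]
      calc _ ≤ (b : ℝ) ^ 2 * ((((b : ℝ) * lam) ^ 2) ^ n * (lam * ν i) ^ 2) := by
            gcongr; linarith [b.cast_nonneg (α := ℝ)]
        _ = (((b : ℝ) * lam) ^ 2) ^ n * (((b : ℝ) * lam) ^ 2 * ν i ^ 2) := by ring
        _ ≤ _ := by gcongr; exact hν i
    rw [sum_rootLaw_mul_levelSum_sq_succ hM1 heig]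
    calc _ ≤ b * ((((b : ℝ) * lam) ^ 2) ^ n * C)
          + (((b : ℝ) * lam) ^ 2) ^ n * (((b : ℝ) * lam) ^ 2 * K) :=
          add_le_add (mul_le_mul_of_nonneg_left hmix b.cast_nonneg) hnew
      _ = _ := by rw [pow_succ]; linear_combination (((b : ℝ) * lam) ^ 2) ^ n * hfix

end Moments

section Cylinders

theorem lintegral_eq_sum_of_partition {Ω ι : Type*} [MeasurableSpace Ω] [Fintype ι]
    {μ : Measure Ω} {A : ι → Set Ω} (hA : ∀ c, MeasurableSet (A c))
    (hdisj : Pairwise (Function.onFun Disjoint A)) (hcover : ⋃ c, A c = Set.univ)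
    {f : Ω → ℝ≥0∞} {v : ι → ℝ≥0∞} (hf : ∀ c, ∀ ω ∈ A c, f ω = v c) :
    ∫⁻ ω, f ω ∂μ = ∑ c, v c * μ (A c) := by
  rw [← setLIntegral_univ, ← hcover, lintegral_iUnion hA hdisj, tsum_fintype]
  exact sum_congr rfl fun c _ => by rw [setLIntegral_congr_fun (hA c) (hf c), setLIntegral_const]

variable {Ω : Type*} {b k : ℕ}

def IsTreeMarkovChain [MeasurableSpace Ω] (μ : Measure Ω) (pi : Fin k → ℝ)
    (M : Matrix (Fin k) (Fin k) ℝ) (ξ : (n : ℕ) → (Fin n → Fin b) → Ω → Fin k) : Prop :=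
  ∀ n (f : (m : ℕ) → (Fin m → Fin b) → Fin k),
    μ {ω | ∀ m, m ≤ n → ∀ x : Fin m → Fin b, ξ m x ω = f m x}
      = ENNReal.ofReal (pi (f 0 Fin.elim0) * treeWeight M n f)

namespace TreeConfig

def cylinder (ξ : (n : ℕ) → (Fin n → Fin b) → Ω → Fin k) {n : ℕ} (c : TreeConfig b k n) :
    Set Ω :=
  {ω | ∀ m, m ≤ n → ∀ x : Fin m → Fin b, ξ m x ω = c.extend m x}

variable {ξ : (n : ℕ) → (Fin n → Fin b) → Ω → Fin k} {n : ℕ}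

theorem measurableSet_cylinder [MeasurableSpace Ω] (hmeas : ∀ n x, Measurable (ξ n x))
    (c : TreeConfig b k n) : MeasurableSet (c.cylinder ξ) := by
  have : c.cylinder ξ = ⋂ m, ⋂ (_ : m ≤ n), ⋂ x, ξ m x ⁻¹' {c.extend m x} := by
    ext ω
    simp [cylinder]
  rw [this]
  exact .iInter fun m => .iInter fun _ => .iInter fun x => hmeas m x (measurableSet_singleton _)

theorem pairwise_disjoint_cylinder :
    Pairwise (Function.onFun Disjoint fun c : TreeConfig b k n => c.cylinder ξ) := by
  intro c c' hne
  refine Set.disjoint_left.mpr fun ω hc hc' => hne (funext fun m => funext fun x => ?_)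
  have hm : (m : ℕ) < n + 1 := m.isLt
  have := (hc m (by omega) x).symm.trans (hc' m (by omega) x)
  rwa [extend_of_lt c hm, extend_of_lt c' hm] at this

theorem iUnion_cylinder : ⋃ c : TreeConfig b k n, c.cylinder ξ = Set.univ := by
  refine Set.eq_univ_of_forall fun ω =>
    Set.mem_iUnion.mpr ⟨(fun m x => ξ m x ω : TreeConfig b k n), fun m hm x => ?_⟩
  exact (extend_of_lt (c := (fun m x => ξ m x ω : TreeConfig b k n)) (Nat.lt_succ_of_le hm) x).symm

theorem cylinder_ofRoot (i : Fin k) :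
    (ofRoot i : TreeConfig b k 0).cylinder ξ = {ω | ξ 0 Fin.elim0 ω = i} := by
  ext ω
  refine ⟨fun h => h 0 le_rfl Fin.elim0, fun h m hm x => ?_⟩
  obtain rfl : m = 0 := by omega
  rw [Subsingleton.elim x Fin.elim0, h]
  rfl

theorem cylinder_subset_root (c : TreeConfig b k n) :
    c.cylinder ξ ⊆ {ω | ξ 0 Fin.elim0 ω = c.root} := fun _ h =>
  (h 0 (Nat.zero_le n) Fin.elim0).trans (extend_zero c _)

end TreeConfig

open TreeConfig

theorem IsTreeMarkovChain.measure_cylinder [MeasurableSpace Ω] {μ : Measure Ω} {pi : Fin k → ℝ}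
    {M : Matrix (Fin k) (Fin k) ℝ} {ξ : (n : ℕ) → (Fin n → Fin b) → Ω → Fin k}
    (h : IsTreeMarkovChain μ pi M ξ) {n : ℕ} (c : TreeConfig b k n) :
    μ (c.cylinder ξ) = ENNReal.ofReal (pi c.root * treeWeight M n c.extend) := by
  rw [TreeConfig.cylinder, h, extend_zero]

end Cylinders

section Conditioning

open TreeConfig
variable {Ω : Type*} [MeasurableSpace Ω] {b k n : ℕ} {μ : Measure Ω} {pi : Fin k → ℝ}
  {M : Matrix (Fin k) (Fin k) ℝ} {ξ : (n : ℕ) → (Fin n → Fin b) → Ω → Fin k}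

theorem IsTreeMarkovChain.measure_cylinder_inter_root (h : IsTreeMarkovChain μ pi M ξ)
    (i : Fin k) (c : TreeConfig b k n) :
    μ (c.cylinder ξ ∩ {ω | ξ 0 Fin.elim0 ω = i}) = ENNReal.ofReal (pi i * rootLaw M i c) := by
  by_cases hc : c.root = i
  · rw [Set.inter_eq_left.mpr (hc ▸ c.cylinder_subset_root), h.measure_cylinder, rootLaw,
      if_pos hc, hc]
  · have : c.cylinder ξ ∩ {ω | ξ 0 Fin.elim0 ω = i} = ∅ :=
      Set.eq_empty_of_forall_notMem fun ω hω =>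
        hc ((c.cylinder_subset_root hω.1).symm.trans hω.2)
    simp [this, rootLaw, hc]

theorem IsTreeMarkovChain.lintegral_cond_root (h : IsTreeMarkovChain μ pi M ξ)
    (hmeas : ∀ n x, Measurable (ξ n x)) {i : Fin k} (hpi : 0 < pi i) {f : Ω → ℝ≥0∞}
    {v : TreeConfig b k n → ℝ≥0∞} (hf : ∀ c, ∀ ω ∈ c.cylinder ξ, f ω = v c) :
    ∫⁻ ω, f ω ∂μ[|{ω | ξ 0 Fin.elim0 ω = i}] = ∑ c, ENNReal.ofReal (rootLaw M i c) * v c := by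
  have hroot : μ {ω | ξ 0 Fin.elim0 ω = i} = ENNReal.ofReal (pi i) := by
    rw [← cylinder_ofRoot (b := b), h.measure_cylinder]
    simp [treeWeight, root, ofRoot]
  have hpi' : ENNReal.ofReal (pi i) ≠ 0 := by simpa using hpi
  rw [ProbabilityTheory.cond, lintegral_smul_measure,
    lintegral_eq_sum_of_partition (measurableSet_cylinder hmeas) pairwise_disjoint_cylinder
      iUnion_cylinder hf, smul_eq_mul, mul_sum]
  refine sum_congr rfl fun c _ => ?_
  rw [Measure.restrict_apply (measurableSet_cylinder hmeas c), h.measure_cylinder_inter_root,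
    ENNReal.ofReal_mul hpi.le, hroot, mul_comm (v c), ← mul_assoc, ← mul_assoc,
    ENNReal.inv_mul_cancel hpi' ENNReal.ofReal_ne_top, one_mul]

theorem IsTreeMarkovChain.lintegral_cond_root_sq (h : IsTreeMarkovChain μ pi M ξ)
    (hmeas : ∀ n x, Measurable (ξ n x)) (hM0 : ∀ i j, 0 ≤ M i j) {i : Fin k} (hpi : 0 < pi i)
    (ν : Fin k → ℝ) (t : ℝ) :
    ∫⁻ ω, ENNReal.ofReal ((t * ∑ x : Fin n → Fin b, ν (ξ n x ω)) ^ 2)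
        ∂μ[|{ω | ξ 0 Fin.elim0 ω = i}]
      = ENNReal.ofReal
          (t ^ 2 * ∑ c : TreeConfig b k n, rootLaw M i c * levelSum ν n c.extend ^ 2) := by
  rw [h.lintegral_cond_root hmeas hpi
    (v := fun c => ENNReal.ofReal ((t * levelSum ν n c.extend) ^ 2))
    fun c ω hω => by simp only [levelSum, fun x => hω n le_rfl x]]
  rw [mul_sum, ENNReal.ofReal_sum_of_nonneg fun c _ =>
    mul_nonneg (sq_nonneg t) (mul_nonneg (rootLaw_nonneg hM0 i c) (sq_nonneg _))]
  refine sum_congr rfl fun c _ => ?_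
  rw [← ENNReal.ofReal_mul (rootLaw_nonneg hM0 i c)]
  congr 1
  ring

end Conditioning

theorem stmt_1_general
    {Ω : Type*} [MeasurableSpace Ω] (μ : Measure Ω)
    (b k : ℕ)
    (M : Matrix (Fin k) (Fin k) ℝ) (pi : Fin k → ℝ) (lam : ℝ) (ν : Fin k → ℝ)
    (hM0 : ∀ i j, 0 ≤ M i j) (hM1 : ∀ i, ∑ j, M i j = 1)
    (hpipos : ∀ i, 0 < pi i)
    (heig : M.mulVec ν = lam • ν)
    (ξ : (n : ℕ) → (Fin n → Fin b) → Ω → Fin k)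
    (hmeas : ∀ n x, Measurable (ξ n x))
    (hmarkov : ∀ n (f : (m : ℕ) → (Fin m → Fin b) → Fin k),
      μ {ω | ∀ m, m ≤ n → ∀ x : Fin m → Fin b, ξ m x ω = f m x}
        = ENNReal.ofReal (pi (f 0 Fin.elim0) *
            ∏ m ∈ Finset.range n, ∏ x : Fin (m + 1) → Fin b,
              M (f m (x ∘ Fin.castSucc)) (f (m + 1) x)))
    (S : ℕ → Ω → ℝ)
    (hS : ∀ n ω, S n ω = (((b : ℝ) * lam) ^ n)⁻¹ * ∑ x : Fin n → Fin b, ν (ξ n x ω))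
    (hKS : 1 < (b : ℝ) * lam ^ 2)
    :
    ∃ C : ℝ, ∀ (n : ℕ) (i : Fin k),
      ∫⁻ ω, ENNReal.ofReal ((S n ω) ^ 2) ∂(μ[|{ω | ξ 0 Fin.elim0 ω = i}])
        ≤ ENNReal.ofReal C := by
  have hbl : (b : ℝ) * lam ≠ 0 := fun h => by
    rw [sq, ← mul_assoc, h, zero_mul] at hKS
    linarith
  refine ⟨(∑ j, ν j ^ 2) * (b * lam ^ 2) / (b * lam ^ 2 - 1), fun n i => ?_⟩
  simp only [hS, IsTreeMarkovChain.lintegral_cond_root_sq hmarkov hmeas hM0 (hpipos i)]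
  refine ENNReal.ofReal_le_ofReal ?_
  calc _ ≤ ((((b : ℝ) * lam) ^ n)⁻¹) ^ 2 * ((((b : ℝ) * lam) ^ 2) ^ n
          * ((∑ j, ν j ^ 2) * (b * lam ^ 2) / (b * lam ^ 2 - 1))) := by
        gcongr
        exact sum_rootLaw_mul_levelSum_sq_le hM0 hM1 heig hKS n i
    _ = _ := by
        rw [← pow_mul, mul_comm 2 n, pow_mul, inv_pow, ← mul_assoc, inv_mul_cancel₀ (by positivity),
          one_mul]

theorem stmt_1
    {Ω : Type*} [MeasurableSpace Ω] (μ : Measure Ω) [IsProbabilityMeasure μ]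
    (b k : ℕ) (hb : 2 ≤ b) (hk : 2 ≤ k)
    (M : Matrix (Fin k) (Fin k) ℝ) (pi : Fin k → ℝ) (lam : ℝ) (ν : Fin k → ℝ)
    (hM0 : ∀ i j, 0 ≤ M i j) (hM1 : ∀ i, ∑ j, M i j = 1)
    (hMirr : ∀ i j, ∃ n : ℕ, 0 < (M ^ n) i j)
    (hpipos : ∀ i, 0 < pi i) (hpisum : ∑ i, pi i = 1)
    (hpistat : ∀ j, ∑ i, pi i * M i j = pi j)
    (heig : M.mulVec ν = lam • ν) (hν0 : ν ≠ 0)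
    (hνnorm : ∑ i, pi i * ν i ^ 2 = 1)
    (hsecond : ∀ lam' : ℝ, lam' ≠ 1 →
      (∃ w : Fin k → ℝ, w ≠ 0 ∧ M.mulVec w = lam' • w) → |lam'| ≤ |lam|)
    (ξ : (n : ℕ) → (Fin n → Fin b) → Ω → Fin k)
    (hmeas : ∀ n x, Measurable (ξ n x))
    (hmarkov : ∀ n (f : (m : ℕ) → (Fin m → Fin b) → Fin k),
      μ {ω | ∀ m, m ≤ n → ∀ x : Fin m → Fin b, ξ m x ω = f m x}
        = ENNReal.ofReal (pi (f 0 Fin.elim0) *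
            ∏ m ∈ Finset.range n, ∏ x : Fin (m + 1) → Fin b,
              M (f m (x ∘ Fin.castSucc)) (f (m + 1) x)))
    (S : ℕ → Ω → ℝ)
    (hS : ∀ n ω, S n ω = (((b : ℝ) * lam) ^ n)⁻¹ * ∑ x : Fin n → Fin b, ν (ξ n x ω))
    (hKS : 1 < (b : ℝ) * lam ^ 2)
    :
    ∃ C : ℝ, ∀ (n : ℕ) (i : Fin k),
      ∫⁻ ω, ENNReal.ofReal ((S n ω) ^ 2) ∂(μ[|{ω | ξ 0 Fin.elim0 ω = i}])
        ≤ ENNReal.ofReal C :=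
  stmt_1_general μ b k M pi lam ν hM0 hM1 hpipos heig ξ hmeas hmarkov S hS hKS
end

section
/- (Exponential moment bound near zero) Assume bλ² > 1. There exist c' = c'(M) < ∞ and ζ₀ ∈ (0, ∞) such that for all n ≥ 0, all states i ∈ [k], and all ζ with |ζ| < ζ₀, E[e^{ζ S_n} | ξ_ρ = i] ≤ exp(ν_i ζ + c' ζ²). -/
/-!
Conditioning on the children of the root, whose subtrees are independent copies of the chain,
the conditional moment generating function `Z_n(i, t) = E[exp (t ∑_{x ∈ L_n} σ_x) | ξ_ρ = i]`
satisfies `Z_{n+1}(i, t) = (∑_j M i j Z_n(j, t)) ^ b`, with `Z_0(i, t) = exp (t ν_i)`.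
Along `t = ζ / (bλ)^n` the bound `Z_n(i, t) ≤ exp (ν_i ζ + c ζ²)` then propagates from `n` to
`n + 1`: since `exp x ≤ 1 + x + x²` for `|x| ≤ 1` and `M ν = λ ν`, one step of the recursion
is bounded by `exp (b λ ν_i ζ' + b (c + C) ζ'²)` with `ζ' = ζ / (bλ)` and `C` depending only
on `ν`, and `b (c + C) ζ'² = c ζ²` for `c = C / (bλ² - 1)`, which is positive as `bλ² > 1`.
-/

open MeasureTheory ProbabilityTheory Finset Real
open scoped Matrix ENNReal

@[to_additive]
theorem prod_fin_succ_fun {α β : Type*} [Fintype α] [CommMonoid β] {n : ℕ}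
    (f : (Fin (n + 1) → α) → β) : ∏ x, f x = ∏ c, ∏ y : Fin n → α, f (Fin.cons c y) := by
  rw [← Fintype.prod_prod_type']
  exact (Fintype.prod_equiv (Fin.consEquiv fun _ => α) _ f fun _ => rfl).symm

theorem sum_mul_exp_le_exp {ι : Type*} [Fintype ι] {p a : ι → ℝ} (hp : ∀ j, 0 ≤ p j)
    (hp1 : ∑ j, p j = 1) (ha : ∀ j, |a j| ≤ 1) :
    ∑ j, p j * exp (a j) ≤ exp (∑ j, p j * a j + ∑ j, p j * a j ^ 2) :=
  calc ∑ j, p j * exp (a j) ≤ ∑ j, p j * (1 + a j + a j ^ 2) :=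
        sum_le_sum fun j _ => mul_le_mul_of_nonneg_left
          (by linarith [(abs_le.mp (abs_exp_sub_one_sub_id_le (ha j))).2]) (hp j)
    _ = (∑ j, p j * a j + ∑ j, p j * a j ^ 2) + 1 := by
        simp only [mul_add, mul_one, sum_add_distrib, hp1]; ring
    _ ≤ _ := add_one_le_exp _

theorem lintegral_comp_eq_sum_preimage {Ω α : Type*} [MeasurableSpace Ω] [Fintype α]
    (μ : Measure Ω) {L : Ω → α} (hL : ∀ a, MeasurableSet (L ⁻¹' {a})) (G : α → ℝ≥0∞) :
    ∫⁻ ω, G (L ω) ∂μ = ∑ a, G a * μ (L ⁻¹' {a}) := by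
  let : MeasurableSpace α := ⊤
  have hLm : Measurable L := measurable_to_countable' hL
  rw [← lintegral_map (measurable_of_countable G) hLm, lintegral_fintype]
  simp_rw [Measure.map_apply hLm (measurableSet_singleton _)]

def branchStep {ι : Type*} [Fintype ι] (M : Matrix ι ι ℝ) (b : ℕ) (φ : ι → ℝ) : ι → ℝ :=
  (M *ᵥ φ) ^ b

section branchStep

variable {ι : Type*} [Fintype ι] {M : Matrix ι ι ℝ} {ν : ι → ℝ} {lam B c : ℝ} {b : ℕ}

theorem mulVec_exp_le_exp (hM0 : ∀ i j, 0 ≤ M i j) (hM1 : ∀ i, ∑ j, M i j = 1)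
    (heig : M *ᵥ ν = lam • ν) (hB : ∀ j, |ν j| ≤ B) (hc0 : 0 ≤ c) {ζ : ℝ}
    (hcζ : c * |ζ| ≤ 1) (hBζ : (B + 1) * |ζ| ≤ 1) (i : ι) :
    (M *ᵥ fun j => exp (ν j * ζ + c * ζ ^ 2)) i
      ≤ exp (lam * ν i * ζ + (c + (B + 1) ^ 2) * ζ ^ 2) := by
  set a : ι → ℝ := fun j => ν j * ζ + c * ζ ^ 2
  have ha (j : ι) : |a j| ≤ (B + 1) * |ζ| := calc
    |a j| ≤ |ν j| * |ζ| + c * |ζ| * |ζ| := by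
      refine (abs_add_le _ _).trans_eq ?_
      rw [abs_mul, abs_mul, abs_of_nonneg hc0, abs_pow, sq, mul_assoc]
    _ ≤ (B + 1) * |ζ| := by nlinarith [abs_nonneg ζ, hB j]
  have hmean : ∑ j, M i j * a j = lam * ν i * ζ + c * ζ ^ 2 := by
    have hrow : ∑ j, M i j * ν j = lam * ν i := congrFun heig i
    simp only [a, mul_add, sum_add_distrib, ← mul_assoc, ← sum_mul, hrow, hM1, one_mul]
  have hvar : ∑ j, M i j * a j ^ 2 ≤ (B + 1) ^ 2 * ζ ^ 2 := calc
    _ ≤ ∑ j, M i j * ((B + 1) ^ 2 * ζ ^ 2) := by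
      refine sum_le_sum fun j _ => mul_le_mul_of_nonneg_left ?_ (hM0 i j)
      rw [← sq_abs ζ, ← mul_pow, ← sq_abs (a j)]
      exact pow_le_pow_left₀ (abs_nonneg _) (ha j) 2
    _ = (B + 1) ^ 2 * ζ ^ 2 := by rw [← sum_mul, hM1, one_mul]
  calc (M *ᵥ fun j => exp (a j)) i = ∑ j, M i j * exp (a j) := rfl
    _ ≤ exp (∑ j, M i j * a j + ∑ j, M i j * a j ^ 2) :=
      sum_mul_exp_le_exp (hM0 i) (hM1 i) fun j => (ha j).trans hBζ
    _ ≤ _ := by rw [exp_le_exp, hmean]; linarith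

theorem iterate_branchStep_nonneg (hM0 : ∀ i j, 0 ≤ M i j) {φ : ι → ℝ} (hφ : 0 ≤ φ) (n : ℕ) :
    0 ≤ (branchStep M b)^[n] φ :=
  Set.MapsTo.iterate (f := branchStep M b) (s := {φ | 0 ≤ φ})
    (fun ψ (hψ : 0 ≤ ψ) i =>
      pow_nonneg (sum_nonneg fun j _ => mul_nonneg (hM0 i j) (Pi.le_def.mp hψ j)) b) n hφ

theorem iterate_branchStep_exp_le (hM0 : ∀ i j, 0 ≤ M i j) (hM1 : ∀ i, ∑ j, M i j = 1)
    (heig : M *ᵥ ν = lam • ν) (hB : ∀ j, |ν j| ≤ B) (hc0 : 0 ≤ c)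
    (hc : (B + 1) ^ 2 = c * (b * lam ^ 2 - 1)) (hblam : 1 ≤ |b * lam|) :
    ∀ (n : ℕ) (i : ι) {ζ : ℝ}, c * |ζ| ≤ 1 → (B + 1) * |ζ| ≤ 1 →
      (branchStep M b)^[n] (fun j => exp (ζ / (b * lam) ^ n * ν j)) i
        ≤ exp (ν i * ζ + c * ζ ^ 2)
  | 0, i, ζ, _, _ => by
    rw [Function.iterate_zero_apply, pow_zero, div_one, exp_le_exp]
    nlinarith [sq_nonneg ζ]
  | n + 1, i, ζ, hcζ, hBζ => by
    have hblam0 : (b : ℝ) * lam ≠ 0 := abs_pos.mp (one_pos.trans_le hblam)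
    set ζ' := ζ / (b * lam) with hζ'_def
    have hζ' : |ζ'| ≤ |ζ| := by rw [abs_div]; exact div_le_self (abs_nonneg _) hblam
    have hcζ' : c * |ζ'| ≤ 1 := (mul_le_mul_of_nonneg_left hζ' hc0).trans hcζ
    have hBζ' : (B + 1) * |ζ'| ≤ 1 :=
      (mul_le_mul_of_nonneg_left hζ' (by linarith [(abs_nonneg (ν i)).trans (hB i)])).trans hBζ
    have hsub (j : ι) := iterate_branchStep_exp_le hM0 hM1 heig hB hc0 hc hblam n j hcζ' hBζ'
    have hnonneg : 0 ≤ (M *ᵥ (branchStep M b)^[n] fun j => exp (ζ' / (b * lam) ^ n * ν j)) i :=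
      sum_nonneg fun j _ => mul_nonneg (hM0 i j)
        (iterate_branchStep_nonneg hM0 (fun j => (exp_pos _).le) n j)
    have hmono : (M *ᵥ (branchStep M b)^[n] fun j => exp (ζ' / (b * lam) ^ n * ν j)) i
        ≤ (M *ᵥ fun j => exp (ν j * ζ' + c * ζ' ^ 2)) i :=
      sum_le_sum fun j _ => mul_le_mul_of_nonneg_left (hsub j) (hM0 i j)
    calc (branchStep M b)^[n + 1] (fun j => exp (ζ / (b * lam) ^ (n + 1) * ν j)) i
        = (M *ᵥ (branchStep M b)^[n] fun j => exp (ζ' / (b * lam) ^ n * ν j)) i ^ b := by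
          rw [Function.iterate_succ_apply', branchStep, Pi.pow_apply, pow_succ', ← div_div]
      _ ≤ (M *ᵥ fun j => exp (ν j * ζ' + c * ζ' ^ 2)) i ^ b := pow_le_pow_left₀ hnonneg hmono b
      _ ≤ exp (lam * ν i * ζ' + (c + (B + 1) ^ 2) * ζ' ^ 2) ^ b :=
          pow_le_pow_left₀ (hnonneg.trans hmono)
            (mulVec_exp_le_exp hM0 hM1 heig hB hc0 hcζ' hBζ' i) b
      _ = exp (ν i * ζ + c * ζ ^ 2) := by
          rw [← exp_nat_mul, hc, hζ'_def]
          have hb0 : (b : ℝ) ≠ 0 := left_ne_zero_of_mul hblam0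
          have hlam0 : lam ≠ 0 := right_ne_zero_of_mul hblam0
          congr 1
          field_simp
          ring

theorem exists_iterate_branchStep_exp_le (hM0 : ∀ i j, 0 ≤ M i j) (hM1 : ∀ i, ∑ j, M i j = 1)
    (heig : M *ᵥ ν = lam • ν) (hKS : 1 < (b : ℝ) * lam ^ 2) :
    ∃ c ζ₀ : ℝ, 0 < ζ₀ ∧ ∀ (n : ℕ) (i : ι) (ζ : ℝ), |ζ| < ζ₀ →
      (branchStep M b)^[n] (fun j => exp (ζ / (b * lam) ^ n * ν j)) i
        ≤ exp (ν i * ζ + c * ζ ^ 2) := by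
  set B := ∑ j, |ν j|
  have hB (j : ι) : |ν j| ≤ B := single_le_sum (fun j _ => abs_nonneg (ν j)) (mem_univ j)
  have hB0 : 0 ≤ B := sum_nonneg fun j _ => abs_nonneg _
  have hD : 0 < (b : ℝ) * lam ^ 2 - 1 := by linarith
  set c := (B + 1) ^ 2 / ((b : ℝ) * lam ^ 2 - 1)
  have hc0 : 0 ≤ c := by positivity
  have hblam : 1 ≤ |(b : ℝ) * lam| := by
    have hb : (1 : ℝ) ≤ b := by
      rcases Nat.eq_zero_or_pos b with rfl | hb
      · norm_num at hKS
      · exact_mod_cast hb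
    rw [← one_le_sq_iff_one_le_abs, mul_pow]
    nlinarith
  refine ⟨c, 1 / (B + 1 + c), by positivity, fun n i ζ hζ => ?_⟩
  have hζ : (B + 1 + c) * |ζ| < 1 := by
    rwa [lt_div_iff₀ (by positivity), mul_comm] at hζ
  exact iterate_branchStep_exp_le hM0 hM1 heig hB hc0 (div_mul_cancel₀ _ hD.ne').symm hblam n i
    (by nlinarith [abs_nonneg ζ]) (by nlinarith [abs_nonneg ζ])

end branchStep

def TreeLabeling (b k : ℕ) : ℕ → Type
  | 0 => Fin k
  | n + 1 => Fin k × (Fin b → TreeLabeling b k n)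

namespace TreeLabeling

variable {b k : ℕ}

instance instFintype : ∀ n, Fintype (TreeLabeling b k n)
  | 0 => inferInstanceAs (Fintype (Fin k))
  | n + 1 =>
    letI := instFintype n
    inferInstanceAs (Fintype (Fin k × (Fin b → TreeLabeling b k n)))

/-- The label of the level-`m` vertex reached from the root along the word `x`; for `m > n` it is
junk (the label of the level-`n` ancestor). -/
def label : ∀ {n : ℕ}, TreeLabeling b k n → (m : ℕ) → (Fin m → Fin b) → Fin k
  | 0, g, _, _ => g
  | _ + 1, g, 0, _ => g.1
  | _ + 1, g, m + 1, x => label (g.2 (x 0)) m (Fin.tail x)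

def root {n : ℕ} (g : TreeLabeling b k n) : Fin k := g.label 0 Fin.elim0

def truncate (f : (m : ℕ) → (Fin m → Fin b) → Fin k) : ∀ n, TreeLabeling b k n
  | 0 => f 0 Fin.elim0
  | n + 1 => (f 0 Fin.elim0, fun c => truncate (fun m x => f (m + 1) (Fin.cons c x)) n)

def weight (M : Matrix (Fin k) (Fin k) ℝ) : ∀ {n : ℕ}, TreeLabeling b k n → ℝ
  | 0, _ => 1
  | _ + 1, g => ∏ c, M g.1 (g.2 c).root * (g.2 c).weight M

def leafSum (ν : Fin k → ℝ) : ∀ {n : ℕ}, TreeLabeling b k n → ℝ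
  | 0, g => ν g
  | _ + 1, g => ∑ c, (g.2 c).leafSum ν

theorem label_zero {n : ℕ} (g : TreeLabeling b k n) (x : Fin 0 → Fin b) :
    g.label 0 x = g.root := by
  rw [Subsingleton.elim x Fin.elim0]; rfl

theorem label_succ_cons {n : ℕ} (g : TreeLabeling b k (n + 1)) (m : ℕ) (c : Fin b)
    (x : Fin m → Fin b) : g.label (m + 1) (Fin.cons c x) = (g.2 c).label m x := by
  simp [label, Fin.tail_cons]

theorem label_truncate : ∀ (f : (m : ℕ) → (Fin m → Fin b) → Fin k) (n m : ℕ), m ≤ n →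
    ∀ x, (truncate f n).label m x = f m x
  | f, 0, m, hm, x => by
    obtain rfl : m = 0 := Nat.le_zero.mp hm
    exact congrArg (f 0) (Subsingleton.elim _ _)
  | f, n + 1, 0, _, x => congrArg (f 0) (Subsingleton.elim _ _)
  | f, n + 1, m + 1, hm, x => by
    rw [← Fin.cons_self_tail x, label_succ_cons]
    exact label_truncate _ n m (Nat.le_of_succ_le_succ hm) _

theorem eq_of_label_eq : ∀ {n : ℕ} {g g' : TreeLabeling b k n},
    (∀ m ≤ n, ∀ x, g.label m x = g'.label m x) → g = g'
  | 0, _, _, h => h 0 le_rfl Fin.elim0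
  | n + 1, g, g', h => by
    refine Prod.ext (h 0 (Nat.zero_le _) Fin.elim0)
      (funext fun c => eq_of_label_eq fun m hm x => ?_)
    rw [← label_succ_cons g, ← label_succ_cons g']
    exact h (m + 1) (Nat.succ_le_succ hm) _

theorem truncate_eq_iff {f : (m : ℕ) → (Fin m → Fin b) → Fin k} {n : ℕ}
    {g : TreeLabeling b k n} : truncate f n = g ↔ ∀ m ≤ n, ∀ x, f m x = g.label m x :=
  ⟨fun h m hm x => h ▸ (label_truncate f n m hm x).symm,
    fun h => eq_of_label_eq fun m hm x => (label_truncate f n m hm x).trans (h m hm x)⟩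

theorem sum_label_eq_leafSum (ν : Fin k → ℝ) :
    ∀ {n : ℕ} (g : TreeLabeling b k n), ∑ x : Fin n → Fin b, ν (g.label n x) = g.leafSum ν
  | 0, g => by rw [Fintype.sum_subsingleton _ Fin.elim0]; rfl
  | n + 1, g => by
    rw [sum_fin_succ_fun]
    refine sum_congr rfl fun c _ => ?_
    simp only [label_succ_cons, sum_label_eq_leafSum ν (g.2 c)]

theorem prod_transition_eq_weight (M : Matrix (Fin k) (Fin k) ℝ) :
    ∀ {n : ℕ} (g : TreeLabeling b k n),
      ∏ m ∈ range n, ∏ x : Fin (m + 1) → Fin b,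
        M (g.label m (x ∘ Fin.castSucc)) (g.label (m + 1) x) = g.weight M
  | 0, _ => rfl
  | n + 1, g => by
    have hroot : ∏ x : Fin 1 → Fin b, M (g.label 0 (x ∘ Fin.castSucc)) (g.label 1 x)
        = ∏ c, M g.1 (g.2 c).root := by
      rw [prod_fin_succ_fun]
      refine prod_congr rfl fun c _ => ?_
      rw [Fintype.prod_subsingleton _ Fin.elim0, label_zero, label_succ_cons, label_zero]
      rfl
    have hsub (m : ℕ) : ∏ x : Fin (m + 2) → Fin b,
          M (g.label (m + 1) (x ∘ Fin.castSucc)) (g.label (m + 2) x)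
        = ∏ c, ∏ y : Fin (m + 1) → Fin b,
            M ((g.2 c).label m (y ∘ Fin.castSucc)) ((g.2 c).label (m + 1) y) := by
      rw [prod_fin_succ_fun]
      refine prod_congr rfl fun c _ => prod_congr rfl fun y _ => ?_
      have : (Fin.cons c y : Fin (m + 2) → Fin b) ∘ Fin.castSucc
          = Fin.cons c (y ∘ Fin.castSucc) := by
        funext j; cases j using Fin.cases <;> simp
      rw [this, label_succ_cons, label_succ_cons]
    rw [prod_range_succ', hroot, prod_congr rfl fun m _ => hsub m, prod_comm, ← prod_mul_distrib]
    exact prod_congr rfl fun c _ => by rw [prod_transition_eq_weight M (g.2 c), mul_comm]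

theorem weight_nonneg {M : Matrix (Fin k) (Fin k) ℝ} (hM0 : ∀ i j, 0 ≤ M i j) :
    ∀ {n : ℕ} (g : TreeLabeling b k n), 0 ≤ g.weight M
  | 0, _ => zero_le_one
  | _ + 1, g => prod_nonneg fun c _ => mul_nonneg (hM0 _ _) (weight_nonneg hM0 (g.2 c))

theorem sum_weight_mul_exp_leafSum (M : Matrix (Fin k) (Fin k) ℝ) (ν : Fin k → ℝ) (t : ℝ) :
    ∀ (n : ℕ) (w : Fin k → ℝ),
      ∑ g : TreeLabeling b k n, w g.root * (g.weight M * exp (t * g.leafSum ν))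
        = ∑ i, w i * (branchStep M b)^[n] (fun j => exp (t * ν j)) i
  | 0, w => by
    change ∑ g : Fin k, w g * (1 * exp (t * ν g)) = _
    simp
  | n + 1, w => by
    change ∑ g : Fin k × (Fin b → TreeLabeling b k n), w g.1 *
      ((∏ c, M g.1 (g.2 c).root * (g.2 c).weight M) * exp (t * ∑ c, (g.2 c).leafSum ν)) = _
    rw [Fintype.sum_prod_type]
    refine sum_congr rfl fun r _ => ?_
    rw [Function.iterate_succ_apply', branchStep, Pi.pow_apply, Matrix.mulVec, dotProduct,
      ← sum_weight_mul_exp_leafSum M ν t n (M r), Fintype.sum_pow, mul_sum]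
    refine sum_congr rfl fun ch _ => congrArg (w r * ·) ?_
    rw [mul_sum, exp_sum, ← prod_mul_distrib]
    exact prod_congr rfl fun c _ => mul_assoc _ _ _

end TreeLabeling

section TreeIndexedChain

variable {Ω : Type*} {b k : ℕ} {ξ : (n : ℕ) → (Fin n → Fin b) → Ω → Fin k}

def IsTreeIndexedChain [MeasurableSpace Ω] (μ : Measure Ω)
    (ξ : (n : ℕ) → (Fin n → Fin b) → Ω → Fin k) (pi : Fin k → ℝ)
    (M : Matrix (Fin k) (Fin k) ℝ) : Prop :=
  ∀ n (f : (m : ℕ) → (Fin m → Fin b) → Fin k),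
    μ {ω | ∀ m, m ≤ n → ∀ x : Fin m → Fin b, ξ m x ω = f m x}
      = ENNReal.ofReal (pi (f 0 Fin.elim0) *
          ∏ m ∈ Finset.range n, ∏ x : Fin (m + 1) → Fin b,
            M (f m (x ∘ Fin.castSucc)) (f (m + 1) x))

def truncLabeling (ξ : (n : ℕ) → (Fin n → Fin b) → Ω → Fin k) (n : ℕ) (ω : Ω) :
    TreeLabeling b k n :=
  TreeLabeling.truncate (fun m x => ξ m x ω) n

theorem root_truncLabeling (n : ℕ) (ω : Ω) : (truncLabeling ξ n ω).root = ξ 0 Fin.elim0 ω :=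
  TreeLabeling.label_truncate _ n 0 (Nat.zero_le n) _

theorem leafSum_truncLabeling (ν : Fin k → ℝ) (n : ℕ) (ω : Ω) :
    (truncLabeling ξ n ω).leafSum ν = ∑ x, ν (ξ n x ω) := by
  rw [← TreeLabeling.sum_label_eq_leafSum]
  simp only [truncLabeling, TreeLabeling.label_truncate _ n n le_rfl]

theorem preimage_truncLabeling {n : ℕ} (g : TreeLabeling b k n) :
    truncLabeling ξ n ⁻¹' {g} = {ω | ∀ m ≤ n, ∀ x, ξ m x ω = g.label m x} :=
  Set.ext fun _ => TreeLabeling.truncate_eq_iff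

variable [MeasurableSpace Ω] {μ : Measure Ω}

theorem measurableSet_preimage_truncLabeling (hmeas : ∀ n x, Measurable (ξ n x)) {n : ℕ}
    (g : TreeLabeling b k n) : MeasurableSet (truncLabeling ξ n ⁻¹' {g}) := by
  rw [preimage_truncLabeling]
  simp only [Set.ofPred_forall]
  exact .iInter fun m => .iInter fun _ => .iInter fun x => hmeas m x (measurableSet_singleton _)

theorem IsTreeIndexedChain.measure_preimage_truncLabeling {pi : Fin k → ℝ}
    {M : Matrix (Fin k) (Fin k) ℝ} (h : IsTreeIndexedChain μ ξ pi M) {n : ℕ}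
    (g : TreeLabeling b k n) :
    μ (truncLabeling ξ n ⁻¹' {g}) = ENNReal.ofReal (pi g.root * g.weight M) := by
  rw [preimage_truncLabeling, h, TreeLabeling.prod_transition_eq_weight,
    TreeLabeling.label_zero]

theorem IsTreeIndexedChain.measure_root {pi : Fin k → ℝ} {M : Matrix (Fin k) (Fin k) ℝ}
    (h : IsTreeIndexedChain μ ξ pi M) (i : Fin k) :
    μ {ω | ξ 0 Fin.elim0 ω = i} = ENNReal.ofReal (pi i) := by
  have := h.measure_preimage_truncLabeling (n := 0) i
  change μ _ = ENNReal.ofReal (pi i * 1) at this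
  rwa [mul_one] at this

theorem IsTreeIndexedChain.cond_preimage_truncLabeling_le {pi : Fin k → ℝ}
    {M : Matrix (Fin k) (Fin k) ℝ} (h : IsTreeIndexedChain μ ξ pi M) (hM0 : ∀ i j, 0 ≤ M i j)
    (hmeas : ∀ n x, Measurable (ξ n x)) (i : Fin k) {n : ℕ} (g : TreeLabeling b k n) :
    μ[truncLabeling ξ n ⁻¹' {g} | {ω | ξ 0 Fin.elim0 ω = i}]
      ≤ ENNReal.ofReal ((if g.root = i then 1 else 0) * g.weight M) := by
  rw [cond_apply (s := {ω | ξ 0 Fin.elim0 ω = i})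
    (hmeas 0 Fin.elim0 (measurableSet_singleton i))]
  split_ifs with hroot
  · have hsub : {ω | ξ 0 Fin.elim0 ω = i} ∩ truncLabeling ξ n ⁻¹' {g}
        = truncLabeling ξ n ⁻¹' {g} :=
      Set.inter_eq_right.mpr fun ω hω => by
        change ξ 0 Fin.elim0 ω = i
        rw [← root_truncLabeling (ξ := ξ) n ω, Set.mem_singleton_iff.mp hω, hroot]
    rw [hsub, h.measure_root, h.measure_preimage_truncLabeling, hroot, one_mul,
      ENNReal.ofReal_mul' (TreeLabeling.weight_nonneg hM0 g), ← mul_assoc]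
    exact mul_le_of_le_one_left zero_le (ENNReal.inv_mul_le_one _)
  · have hdisj : {ω | ξ 0 Fin.elim0 ω = i} ∩ truncLabeling ξ n ⁻¹' {g} = ∅ :=
      Set.eq_empty_of_forall_notMem fun ω ⟨hω, hωg⟩ => hroot <| by
        rw [← Set.mem_singleton_iff.mp hωg, root_truncLabeling]; exact hω
    simp [hdisj]

theorem IsTreeIndexedChain.lintegral_exp_leafSum_cond_le {pi : Fin k → ℝ}
    {M : Matrix (Fin k) (Fin k) ℝ} (h : IsTreeIndexedChain μ ξ pi M) (hM0 : ∀ i j, 0 ≤ M i j)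
    (hmeas : ∀ n x, Measurable (ξ n x)) (ν : Fin k → ℝ) (t : ℝ) (n : ℕ) (i : Fin k) :
    ∫⁻ ω, ENNReal.ofReal (exp (t * (truncLabeling ξ n ω).leafSum ν))
        ∂μ[|{ω | ξ 0 Fin.elim0 ω = i}]
      ≤ ENNReal.ofReal ((branchStep M b)^[n] (fun j => exp (t * ν j)) i) := calc
  _ = ∑ g : TreeLabeling b k n, ENNReal.ofReal (exp (t * g.leafSum ν)) *
        μ[truncLabeling ξ n ⁻¹' {g} | {ω | ξ 0 Fin.elim0 ω = i}] :=
      lintegral_comp_eq_sum_preimage _ (measurableSet_preimage_truncLabeling hmeas)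
        fun g => ENNReal.ofReal (exp (t * g.leafSum ν))
  _ ≤ ∑ g : TreeLabeling b k n, ENNReal.ofReal (exp (t * g.leafSum ν)) *
        ENNReal.ofReal ((if g.root = i then 1 else 0) * g.weight M) := by
      gcongr with g
      exact h.cond_preimage_truncLabeling_le hM0 hmeas i g
  _ = ENNReal.ofReal (∑ g : TreeLabeling b k n,
        (if g.root = i then 1 else 0) * (g.weight M * exp (t * g.leafSum ν))) := by
      rw [ENNReal.ofReal_sum_of_nonneg fun g _ => mul_nonneg (by split_ifs <;> norm_num)
        (mul_nonneg (TreeLabeling.weight_nonneg hM0 g) (exp_pos _).le)]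
      refine sum_congr rfl fun g _ => ?_
      rw [← ENNReal.ofReal_mul (exp_pos _).le]
      ring_nf
  _ = _ := by
      have := TreeLabeling.sum_weight_mul_exp_leafSum (b := b) M ν t n
        fun j => if j = i then 1 else 0
      beta_reduce at this
      rw [this]
      simp

end TreeIndexedChain

open MeasureTheory ProbabilityTheory Finset
theorem stmt_4_general
    {Ω : Type*} [MeasurableSpace Ω] (μ : Measure Ω)
    (b k : ℕ)
    (M : Matrix (Fin k) (Fin k) ℝ) (pi : Fin k → ℝ) (lam : ℝ) (ν : Fin k → ℝ)
    (hM0 : ∀ i j, 0 ≤ M i j) (hM1 : ∀ i, ∑ j, M i j = 1)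
    (heig : M.mulVec ν = lam • ν)
    (ξ : (n : ℕ) → (Fin n → Fin b) → Ω → Fin k)
    (hmeas : ∀ n x, Measurable (ξ n x))
    (hmarkov : ∀ n (f : (m : ℕ) → (Fin m → Fin b) → Fin k),
      μ {ω | ∀ m, m ≤ n → ∀ x : Fin m → Fin b, ξ m x ω = f m x}
        = ENNReal.ofReal (pi (f 0 Fin.elim0) *
            ∏ m ∈ Finset.range n, ∏ x : Fin (m + 1) → Fin b,
              M (f m (x ∘ Fin.castSucc)) (f (m + 1) x)))
    (S : ℕ → Ω → ℝ)
    (hS : ∀ n ω, S n ω = (((b : ℝ) * lam) ^ n)⁻¹ * ∑ x : Fin n → Fin b, ν (ξ n x ω))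
    (hKS : 1 < (b : ℝ) * lam ^ 2)
    :
    ∃ c' : ℝ, ∃ ζ₀ : ℝ, 0 < ζ₀ ∧
      ∀ (n : ℕ) (i : Fin k) (ζ : ℝ), |ζ| < ζ₀ →
        ∫⁻ ω, ENNReal.ofReal (Real.exp (ζ * S n ω)) ∂(μ[|{ω | ξ 0 Fin.elim0 ω = i}])
          ≤ ENNReal.ofReal (Real.exp (ν i * ζ + c' * ζ ^ 2)) := by
  obtain ⟨c, ζ₀, hζ₀, hbound⟩ := exists_iterate_branchStep_exp_le hM0 hM1 heig hKS
  refine ⟨c, ζ₀, hζ₀, fun n i ζ hζ => ?_⟩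
  have hexp (ω : Ω) : ζ * S n ω = ζ / (b * lam) ^ n * (truncLabeling ξ n ω).leafSum ν := by
    rw [hS, leafSum_truncLabeling, div_eq_mul_inv, mul_assoc]
  simp_rw [hexp]
  exact (IsTreeIndexedChain.lintegral_exp_leafSum_cond_le hmarkov hM0 hmeas ν _ n i).trans
    (ENNReal.ofReal_le_ofReal (hbound n i ζ hζ))

theorem stmt_4
    {Ω : Type*} [MeasurableSpace Ω] (μ : Measure Ω) [IsProbabilityMeasure μ]
    (b k : ℕ) (hb : 2 ≤ b) (hk : 2 ≤ k)
    (M : Matrix (Fin k) (Fin k) ℝ) (pi : Fin k → ℝ) (lam : ℝ) (ν : Fin k → ℝ)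
    (hM0 : ∀ i j, 0 ≤ M i j) (hM1 : ∀ i, ∑ j, M i j = 1)
    (hMirr : ∀ i j, ∃ n : ℕ, 0 < (M ^ n) i j)
    (hpipos : ∀ i, 0 < pi i) (hpisum : ∑ i, pi i = 1)
    (hpistat : ∀ j, ∑ i, pi i * M i j = pi j)
    (heig : M.mulVec ν = lam • ν) (hν0 : ν ≠ 0)
    (hνnorm : ∑ i, pi i * ν i ^ 2 = 1)
    (hsecond : ∀ lam' : ℝ, lam' ≠ 1 →
      (∃ w : Fin k → ℝ, w ≠ 0 ∧ M.mulVec w = lam' • w) → |lam'| ≤ |lam|)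
    (ξ : (n : ℕ) → (Fin n → Fin b) → Ω → Fin k)
    (hmeas : ∀ n x, Measurable (ξ n x))
    (hmarkov : ∀ n (f : (m : ℕ) → (Fin m → Fin b) → Fin k),
      μ {ω | ∀ m, m ≤ n → ∀ x : Fin m → Fin b, ξ m x ω = f m x}
        = ENNReal.ofReal (pi (f 0 Fin.elim0) *
            ∏ m ∈ Finset.range n, ∏ x : Fin (m + 1) → Fin b,
              M (f m (x ∘ Fin.castSucc)) (f (m + 1) x)))
    (S : ℕ → Ω → ℝ)
    (hS : ∀ n ω, S n ω = (((b : ℝ) * lam) ^ n)⁻¹ * ∑ x : Fin n → Fin b, ν (ξ n x ω))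
    (hKS : 1 < (b : ℝ) * lam ^ 2)
    :
    ∃ c' : ℝ, ∃ ζ₀ : ℝ, 0 < ζ₀ ∧
      ∀ (n : ℕ) (i : Fin k) (ζ : ℝ), |ζ| < ζ₀ →
        ∫⁻ ω, ENNReal.ofReal (Real.exp (ζ * S n ω)) ∂(μ[|{ω | ξ 0 Fin.elim0 ω = i}])
          ≤ ENNReal.ofReal (Real.exp (ν i * ζ + c' * ζ ^ 2)) :=
  stmt_4_general μ b k M pi lam ν hM0 hM1 heig ξ hmeas hmarkov S hS hKS
end

section
/- (Exponential moment of the square) Assume bλ² > 1. Then there exist ζ̃ = ζ̃(M) ∈ (0, ∞) and C̃ = C̃(M) < ∞ such that for all n ≥ 0, all i ∈ [k], and all ζ ∈ (−ζ̃, ζ̃), E[e^{ζ S_n²} | ξ_ρ = i] ≤ C̃ < ∞. -/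
/-!
Given the root label `i`, the moment generating function of `S_n` is the expectation of a product
over the leaves, and peeling off the last level of the tree shows
`E[∏_{x ∈ L_n} f(ξ_x) | ξ_ρ = i] = (Φ^[n] f) i` with `Φ f = (M f) ^ b` (`branchMap`). Since
`M ν = λ ν`, a Hoeffding-type estimate gives `Φ (exp (t ν)) ≤ exp (b λ t ν + b C t²)` with
`C = ((1 + |λ|) ‖ν‖)²`; as `b λ² > 1`, the bound `exp (t ν + c t²)` with `c = C / (b λ² - 1)` is
preserved when `t` is multiplied by `b λ`, whence `E[exp (θ S_n) | ξ_ρ = i] ≤ exp (ν_i θ + c θ²)`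
uniformly in `n`. Completing the square at the nearest integer,
`exp (s² / 4K) ≤ exp (K / 4) ∑_m exp (-K m²) (exp (m s) + exp (-m s))`, which turns this
sub-Gaussian bound into a bound on `E[exp (ζ S_n²) | ξ_ρ = i]` for `ζ < 1 / 4K`.
-/

open MeasureTheory ProbabilityTheory Finset Real
open scoped ENNReal

theorem Real.exp_le_add_exp_sq (x : ℝ) : exp x ≤ x + exp (x ^ 2) := by
  rcases le_or_gt |x| 1 with hx | hx
  · linarith [(abs_le.1 (abs_exp_sub_one_sub_id_le hx)).2, add_one_le_exp (x ^ 2)]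
  rcases le_or_gt 0 x with hx0 | hx0
  · have : x ≤ x ^ 2 := by nlinarith [abs_of_nonneg hx0]
    linarith [exp_le_exp.2 this]
  · have : 1 ≤ x + 1 + x ^ 2 := by nlinarith [abs_of_neg hx0]
    linarith [exp_le_one_iff.2 hx0.le, add_one_le_exp (x ^ 2)]

theorem sum_mul_exp_le_exp_sq {ι : Type*} (s : Finset ι) {w d : ι → ℝ} {D : ℝ}
    (hw : ∀ j ∈ s, 0 ≤ w j) (hw1 : ∑ j ∈ s, w j = 1) (hd : ∑ j ∈ s, w j * d j = 0)
    (hD : ∀ j ∈ s, |d j| ≤ D) :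
    ∑ j ∈ s, w j * exp (d j) ≤ exp (D ^ 2) :=
  calc ∑ j ∈ s, w j * exp (d j) ≤ ∑ j ∈ s, w j * (d j + exp (D ^ 2)) := by
        gcongr with j hj
        · exact hw j hj
        refine (exp_le_add_exp_sq _).trans (add_le_add_right (exp_le_exp.2 ?_) _)
        exact sq_le_sq' (abs_le.1 (hD j hj)).1 (abs_le.1 (hD j hj)).2
    _ = exp (D ^ 2) := by
        simp only [mul_add, sum_add_distrib, hd, ← sum_mul, hw1, zero_add, one_mul]

theorem exists_nat_sub_sq_le {y : ℝ} (hy : 0 ≤ y) : ∃ m : ℕ, ((m : ℝ) - y) ^ 2 ≤ 1 / 4 := by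
  refine ⟨⌊y + 1 / 2⌋₊, ?_⟩
  have h₁ := Nat.floor_le (by linarith : 0 ≤ y + 1 / 2)
  have h₂ := Nat.lt_floor_add_one (y + 1 / 2)
  nlinarith

/-- Completing the square at the integer `m` nearest to `|s| / (2K)`. -/
theorem exists_exp_sq_div_le {K : ℝ} (hK : 0 < K) (s : ℝ) :
    ∃ m : ℕ, exp (s ^ 2 / (4 * K))
      ≤ exp (K / 4) * exp (-K * m ^ 2) * (exp (m * s) + exp (-m * s)) := by
  obtain ⟨m, hm⟩ := exists_nat_sub_sq_le (div_nonneg (abs_nonneg s) (by positivity : 0 ≤ 2 * K))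
  refine ⟨m, ?_⟩
  have hsq : s ^ 2 / (4 * K) ≤ K / 4 + -K * m ^ 2 + m * |s| := by
    have : K / 4 + -K * m ^ 2 + m * |s| - s ^ 2 / (4 * K)
        = K * (1 / 4 - ((m : ℝ) - |s| / (2 * K)) ^ 2) := by
      field_simp
      ring_nf
      rw [sq_abs]
    nlinarith
  have habs : exp (m * |s|) ≤ exp (m * s) + exp (-m * s) := by
    rcases abs_cases s with ⟨h, -⟩ | ⟨h, -⟩ <;> rw [h]
    · linarith [exp_pos (-m * s)]
    · rw [mul_neg, ← neg_mul]; linarith [exp_pos (m * s)]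
  calc exp (s ^ 2 / (4 * K)) ≤ exp (K / 4 + -K * m ^ 2 + m * |s|) := exp_le_exp.2 hsq
    _ = exp (K / 4) * exp (-K * m ^ 2) * exp (m * |s|) := by rw [exp_add, exp_add]
    _ ≤ _ := by gcongr

theorem exp_neg_mul_sq_mul_exp_le_half_pow {a c K : ℝ} (ha : 0 ≤ a) (hK : a + c + 1 ≤ K) (m : ℕ) :
    exp (-K * m ^ 2) * exp (a * m + c * m ^ 2) ≤ (1 / 2) ^ m := by
  have hm : (m : ℝ) ≤ m ^ 2 := by exact_mod_cast Nat.le_self_pow two_ne_zero m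
  calc exp (-K * m ^ 2) * exp (a * m + c * m ^ 2) ≤ exp (-1) ^ m := by
        rw [← exp_add, ← exp_nat_mul]
        exact exp_le_exp.2 (by nlinarith)
    _ ≤ (1 / 2) ^ m := by gcongr; exact exp_neg_one_lt_half.le

theorem lintegral_exp_sq_div_le_of_mgf {Ω : Type*} [MeasurableSpace Ω] {μ : Measure Ω}
    {X : Ω → ℝ} (hX : Measurable X) {a c K : ℝ} (ha : 0 ≤ a) (hc : 0 ≤ c) (hK : a + c + 1 ≤ K)
    (hmgf : ∀ θ : ℝ, ∫⁻ ω, ENNReal.ofReal (exp (θ * X ω)) ∂μ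
      ≤ ENNReal.ofReal (exp (a * |θ| + c * θ ^ 2))) :
    ∫⁻ ω, ENNReal.ofReal (exp (X ω ^ 2 / (4 * K))) ∂μ ≤ ENNReal.ofReal (4 * exp (K / 4)) := by
  set g : ℕ → Ω → ℝ≥0∞ := fun m ω => ENNReal.ofReal (exp (-K * m ^ 2)) *
    (ENNReal.ofReal (exp (m * X ω)) + ENNReal.ofReal (exp (-m * X ω)))
  have hexp_meas : ∀ θ : ℝ, Measurable fun ω => ENNReal.ofReal (exp (θ * X ω)) :=
    fun θ => ((hX.const_mul θ).exp).ennreal_ofReal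
  have hg_meas : ∀ m, Measurable (g m) := fun m =>
    ((hexp_meas m).add (by simpa using hexp_meas (-m))).const_mul _
  have hpoint : ∀ ω, ENNReal.ofReal (exp (X ω ^ 2 / (4 * K)))
      ≤ ENNReal.ofReal (exp (K / 4)) * ∑' m, g m ω := by
    intro ω
    obtain ⟨m, hm⟩ := exists_exp_sq_div_le (by linarith) (X ω)
    calc ENNReal.ofReal (exp (X ω ^ 2 / (4 * K))) ≤ ENNReal.ofReal (exp (K / 4)) * g m ω := by
          simp only [g]
          rw [← ENNReal.ofReal_add (exp_pos _).le (exp_pos _).le,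
            ← ENNReal.ofReal_mul (exp_pos _).le, ← ENNReal.ofReal_mul (exp_pos _).le, ← mul_assoc]
          exact ENNReal.ofReal_le_ofReal hm
      _ ≤ _ := by gcongr; exact ENNReal.le_tsum m
  have hterm : ∀ m : ℕ, ∫⁻ ω, g m ω ∂μ ≤ 2 * 2⁻¹ ^ m := by
    intro m
    have hmgf_m : ∀ θ : ℝ, θ = m ∨ θ = -m →
        ∫⁻ ω, ENNReal.ofReal (exp (θ * X ω)) ∂μ ≤ ENNReal.ofReal (exp (a * m + c * m ^ 2)) := by
      intro θ hθ
      have hθ' : |θ| = m ∧ θ ^ 2 = m ^ 2 := by rcases hθ with rfl | rfl <;> simp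
      simpa only [hθ'] using hmgf θ
    calc ∫⁻ ω, g m ω ∂μ
        ≤ ENNReal.ofReal (exp (-K * m ^ 2)) * (2 * ENNReal.ofReal (exp (a * m + c * m ^ 2))) := by
          simp only [g]
          rw [lintegral_const_mul' _ _ ENNReal.ofReal_ne_top, lintegral_add_left (hexp_meas m),
            two_mul]
          gcongr <;> exact hmgf_m _ (by simp)
      _ = 2 * ENNReal.ofReal (exp (-K * m ^ 2) * exp (a * m + c * m ^ 2)) := by
          rw [ENNReal.ofReal_mul (exp_pos _).le]; ring
      _ ≤ 2 * ENNReal.ofReal ((1 / 2) ^ m) := by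
          gcongr; exact exp_neg_mul_sq_mul_exp_le_half_pow ha hK m
      _ = 2 * 2⁻¹ ^ m := by
          rw [ENNReal.ofReal_pow (by norm_num), one_div, ENNReal.ofReal_inv_of_pos two_pos,
            ENNReal.ofReal_ofNat]
  calc ∫⁻ ω, ENNReal.ofReal (exp (X ω ^ 2 / (4 * K))) ∂μ
      ≤ ∫⁻ ω, ENNReal.ofReal (exp (K / 4)) * ∑' m, g m ω ∂μ := lintegral_mono hpoint
    _ = ENNReal.ofReal (exp (K / 4)) * ∑' m, ∫⁻ ω, g m ω ∂μ := by
      rw [lintegral_const_mul _ (Measurable.tsum hg_meas),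
        lintegral_tsum fun m => (hg_meas m).aemeasurable]
    _ ≤ ENNReal.ofReal (exp (K / 4)) * ∑' m : ℕ, 2 * 2⁻¹ ^ m := by
      gcongr with m; exact hterm m
    _ = ENNReal.ofReal (4 * exp (K / 4)) := by
      rw [ENNReal.tsum_mul_left, ENNReal.tsum_geometric, ENNReal.one_sub_inv_two, inv_inv,
        ENNReal.ofReal_mul (by norm_num), ENNReal.ofReal_ofNat, mul_comm]
      norm_num

theorem Fin.prod_comp_init_eq_prod_pow {n : ℕ} {α β : Type*} [Fintype α] [CommMonoid β]
    (G : (Fin n → α) → β) :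
    ∏ x : Fin (n + 1) → α, G (Fin.init x) = ∏ y, G y ^ Fintype.card α := by
  rw [← (Fin.snocEquiv fun _ => α).prod_comp, Fintype.prod_prod_type, Finset.prod_comm]
  change ∏ y : Fin n → α, ∏ t : α, G (Fin.init (Fin.snoc (α := fun _ => α) y t)) = _
  simp only [Fin.init_snoc]
  exact prod_congr rfl fun y _ => by simp

section branchMap

variable {b k : ℕ}

def branchMap (M : Matrix (Fin k) (Fin k) ℝ) (b : ℕ) (f : Fin k → ℝ) (i : Fin k) : ℝ :=
  (∑ j, M i j * f j) ^ b

variable {M : Matrix (Fin k) (Fin k) ℝ}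

theorem branchMap_nonneg (hM0 : ∀ i j, 0 ≤ M i j) {f : Fin k → ℝ} (hf : 0 ≤ f) :
    0 ≤ branchMap M b f := fun i =>
  pow_nonneg (sum_nonneg fun j _ => mul_nonneg (hM0 i j) (hf j)) b

theorem iterate_branchMap_nonneg (hM0 : ∀ i j, 0 ≤ M i j) {f : Fin k → ℝ} (hf : 0 ≤ f) (n : ℕ) :
    0 ≤ (branchMap M b)^[n] f := by
  induction n with
  | zero => exact hf
  | succ n ih => rw [Function.iterate_succ_apply']; exact branchMap_nonneg hM0 ih

theorem branchMap_mono (hM0 : ∀ i j, 0 ≤ M i j) {f g : Fin k → ℝ} (hf : 0 ≤ f) (hfg : f ≤ g) :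
    branchMap M b f ≤ branchMap M b g := fun i =>
  pow_le_pow_left₀ (sum_nonneg fun j _ => mul_nonneg (hM0 i j) (hf j))
    (sum_le_sum fun j _ => mul_le_mul_of_nonneg_left (hfg j) (hM0 i j)) b

variable {ν : Fin k → ℝ} {lam : ℝ}

theorem sum_mul_exp_le_of_mulVec_eq_smul (hM0 : ∀ i j, 0 ≤ M i j) (hM1 : ∀ i, ∑ j, M i j = 1)
    (heig : M.mulVec ν = lam • ν) (i : Fin k) (t : ℝ) :
    ∑ j, M i j * exp (t * ν j) ≤ exp (lam * t * ν i + ((1 + |lam|) * ‖ν‖) ^ 2 * t ^ 2) := by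
  have hrow : ∑ j, M i j * ν j = lam * ν i := by
    simpa [Matrix.mulVec, dotProduct] using congrFun heig i
  have hcentred : ∑ j, M i j * (t * (ν j - lam * ν i)) = 0 := by
    simp only [mul_sub, mul_left_comm _ t, ← mul_sum, sum_sub_distrib, ← sum_mul, hrow, hM1]
    ring
  have hbound : ∀ j ∈ univ, |t * (ν j - lam * ν i)| ≤ (1 + |lam|) * ‖ν‖ * |t| := by
    intro j _
    have hν : ∀ l, |ν l| ≤ ‖ν‖ := fun l => norm_le_pi_norm ν l
    rw [abs_mul, mul_comm]
    gcongr
    calc |ν j - lam * ν i| ≤ |ν j| + |lam| * |ν i| := (abs_sub _ _).trans_eq (by rw [abs_mul])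
      _ ≤ ‖ν‖ + |lam| * ‖ν‖ := by gcongr <;> exact hν _
      _ = (1 + |lam|) * ‖ν‖ := by ring
  calc ∑ j, M i j * exp (t * ν j)
      = exp (lam * t * ν i) * ∑ j, M i j * exp (t * (ν j - lam * ν i)) := by
        rw [mul_sum]
        refine sum_congr rfl fun j _ => ?_
        rw [mul_left_comm, ← exp_add]
        ring_nf
    _ ≤ exp (lam * t * ν i) * exp (((1 + |lam|) * ‖ν‖ * |t|) ^ 2) := by
        gcongr
        exact sum_mul_exp_le_exp_sq univ (fun j _ => hM0 i j) (hM1 i) hcentred hbound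
    _ = exp (lam * t * ν i + ((1 + |lam|) * ‖ν‖) ^ 2 * t ^ 2) := by
        rw [← exp_add, mul_pow, sq_abs]

theorem iterate_branchMap_exp_le (hM0 : ∀ i j, 0 ≤ M i j) (hM1 : ∀ i, ∑ j, M i j = 1)
    (heig : M.mulVec ν = lam • ν) {c : ℝ} (hc : 0 ≤ c)
    (hcb : c + ((1 + |lam|) * ‖ν‖) ^ 2 ≤ c * (b * lam ^ 2))
    (u : ℝ) (n : ℕ) (i : Fin k) :
    (branchMap M b)^[n] (fun j => exp (u * ν j)) i
      ≤ exp ((b * lam) ^ n * u * ν i + c * ((b * lam) ^ n * u) ^ 2) := by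
  induction n generalizing i with
  | zero => simpa using mul_nonneg hc (sq_nonneg u)
  | succ n ih =>
    set t := (b * lam) ^ n * u
    rw [Function.iterate_succ_apply']
    calc branchMap M b ((branchMap M b)^[n] fun j => exp (u * ν j)) i
        ≤ branchMap M b (fun j => exp (c * t ^ 2) * exp (t * ν j)) i := by
          refine branchMap_mono hM0 (iterate_branchMap_nonneg hM0 (fun j => (exp_pos _).le) n)
            (fun j => ?_) i
          rw [← exp_add, add_comm]
          exact ih j
      _ = (exp (c * t ^ 2) * ∑ j, M i j * exp (t * ν j)) ^ b := by
          simp only [branchMap, mul_left_comm _ (exp (c * t ^ 2)), ← mul_sum]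
      _ ≤ exp (c * t ^ 2 + (lam * t * ν i + ((1 + |lam|) * ‖ν‖) ^ 2 * t ^ 2)) ^ b := by
          rw [exp_add]
          gcongr
          · exact mul_nonneg (exp_pos _).le
              (sum_nonneg fun j _ => mul_nonneg (hM0 i j) (exp_pos _).le)
          · exact sum_mul_exp_le_of_mulVec_eq_smul hM0 hM1 heig i t
      _ ≤ exp ((b * lam) ^ (n + 1) * u * ν i + c * ((b * lam) ^ (n + 1) * u) ^ 2) := by
          have ht : (b * lam) ^ (n + 1) * u = b * lam * t := by ring
          rw [← exp_nat_mul, ht, exp_le_exp]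
          have hquad : b * ((c + ((1 + |lam|) * ‖ν‖) ^ 2) * t ^ 2)
              ≤ b * (c * (b * lam ^ 2) * t ^ 2) := by
            gcongr
          nlinarith

end branchMap

/-- Labels in `Fin k` of the vertices of depth at most `n` of the `b`-ary tree, a vertex of
depth `m` being a word `Fin m → Fin b`. -/
abbrev TreeLabelling (b k n : ℕ) : Type := ∀ m : Fin (n + 1), (Fin m → Fin b) → Fin k

namespace TreeLabelling

variable {b k n : ℕ}

def root (h : TreeLabelling b k n) : Fin k := h 0 Fin.elim0

def leaves (h : TreeLabelling b k n) : (Fin n → Fin b) → Fin k := h (Fin.last n)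

def weight (M : Matrix (Fin k) (Fin k) ℝ) (h : TreeLabelling b k n) : ℝ :=
  ∏ m : Fin n, ∏ x : Fin (m + 1) → Fin b, M (h m.castSucc (Fin.init x)) (h m.succ x)

theorem weight_nonneg {M : Matrix (Fin k) (Fin k) ℝ} (hM0 : ∀ i j, 0 ≤ M i j)
    (h : TreeLabelling b k n) : 0 ≤ h.weight M :=
  prod_nonneg fun _ _ => prod_nonneg fun _ _ => hM0 _ _

section snoc

variable (h : TreeLabelling b k n) (g : (Fin (n + 1) → Fin b) → Fin k)

def snoc : TreeLabelling b k (n + 1) :=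
  Fin.snoc (α := fun m : Fin (n + 2) => (Fin m → Fin b) → Fin k) h g

theorem snoc_castSucc (m : Fin (n + 1)) : h.snoc g m.castSucc = h m :=
  Fin.snoc_castSucc (α := fun m : Fin (n + 2) => (Fin m → Fin b) → Fin k) g h m

theorem root_snoc : (h.snoc g).root = h.root :=
  congrFun (h.snoc_castSucc g 0) _

theorem leaves_snoc : (h.snoc g).leaves = g :=
  Fin.snoc_last (α := fun m : Fin (n + 2) => (Fin m → Fin b) → Fin k) g h

theorem weight_snoc (M : Matrix (Fin k) (Fin k) ℝ) :
    (h.snoc g).weight M = h.weight M * ∏ x, M (h.leaves (Fin.init x)) (g x) := by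
  rw [weight, Fin.prod_univ_castSucc]
  congr 1
  · exact prod_congr rfl fun m _ => prod_congr rfl fun x _ =>
      congrArg₂ M (congrFun (h.snoc_castSucc g _) _) (congrFun (h.snoc_castSucc g m.succ) _)
  · exact prod_congr rfl fun x _ =>
      congrArg₂ M (congrFun (h.snoc_castSucc g _) _) (congrFun (h.leaves_snoc g) _)

end snoc

end TreeLabelling

section recursion

open TreeLabelling

variable {b k : ℕ}

theorem sum_weight_mul_prod_leaves_succ {n : ℕ} (M : Matrix (Fin k) (Fin k) ℝ) (f : Fin k → ℝ)
    (i : Fin k) :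
    ∑ h : TreeLabelling b k (n + 1) with h.root = i, h.weight M * ∏ y, f (h.leaves y)
      = ∑ h : TreeLabelling b k n with h.root = i,
          h.weight M * ∏ y, branchMap M b f (h.leaves y) := by
  rw [sum_filter, sum_filter, ← (Fin.snocEquiv _).sum_comp, Fintype.sum_prod_type, sum_comm]
  refine sum_congr rfl fun (h : TreeLabelling b k n) _ => ?_
  change ∑ g, (if (h.snoc g).root = i then
    (h.snoc g).weight M * ∏ y, f ((h.snoc g).leaves y) else 0) = _
  simp only [root_snoc, weight_snoc, leaves_snoc]
  split_ifs
  · simp only [branchMap, mul_assoc, ← mul_sum]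
    congr 1
    have hlevel := Fin.prod_comp_init_eq_prod_pow (α := Fin b) fun y => ∑ j, M (h.leaves y) j * f j
    rw [Fintype.card_fin] at hlevel
    rw [← hlevel, Fintype.prod_sum]
    simp only [prod_mul_distrib]
  · simp

theorem sum_weight_mul_prod_leaves_eq_iterate (M : Matrix (Fin k) (Fin k) ℝ) (n : ℕ)
    (f : Fin k → ℝ) (i : Fin k) :
    ∑ h : TreeLabelling b k n with h.root = i, h.weight M * ∏ y, f (h.leaves y)
      = (branchMap M b)^[n] f i := by
  induction n generalizing f with
  | zero =>
    have hunique : ∀ h : TreeLabelling b k 0, h.root = i → h = fun _ _ => i := by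
      intro h hroot
      funext m x
      obtain rfl : m = 0 := Fin.fin_one_eq_zero m
      obtain rfl : x = Fin.elim0 := funext fun j => j.elim0
      exact hroot
    have hmem : (fun _ _ => i : TreeLabelling b k 0)
        ∈ univ.filter fun h : TreeLabelling b k 0 => h.root = i :=
      mem_filter.2 ⟨mem_univ _, rfl⟩
    rw [sum_eq_single_of_mem _ hmem fun h hh hne => absurd (hunique h (mem_filter.1 hh).2) hne]
    simp [weight, leaves]
  | succ n ih => rw [sum_weight_mul_prod_leaves_succ, ih, Function.iterate_succ_apply]

end recursion

section Markov

open TreeLabelling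

variable {b k : ℕ} {Ω : Type*}

def labelling (ξ : (n : ℕ) → (Fin n → Fin b) → Ω → Fin k) (n : ℕ) (ω : Ω) : TreeLabelling b k n :=
  fun m x => ξ m x ω

theorem leaves_labelling (ξ : (n : ℕ) → (Fin n → Fin b) → Ω → Fin k) (n : ℕ) (ω : Ω) :
    (labelling ξ n ω).leaves = fun y => ξ n y ω :=
  rfl

variable [MeasurableSpace Ω] {μ : Measure Ω} {ξ : (n : ℕ) → (Fin n → Fin b) → Ω → Fin k}
  {M : Matrix (Fin k) (Fin k) ℝ} {pi : Fin k → ℝ}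

def IsTreeMarkov (μ : Measure Ω) (ξ : (n : ℕ) → (Fin n → Fin b) → Ω → Fin k)
    (M : Matrix (Fin k) (Fin k) ℝ) (pi : Fin k → ℝ) : Prop :=
  ∀ n (f : (m : ℕ) → (Fin m → Fin b) → Fin k),
    μ {ω | ∀ m, m ≤ n → ∀ x : Fin m → Fin b, ξ m x ω = f m x}
      = ENNReal.ofReal (pi (f 0 Fin.elim0) *
          ∏ m ∈ range n, ∏ x : Fin (m + 1) → Fin b, M (f m (x ∘ Fin.castSucc)) (f (m + 1) x))

namespace TreeLabelling

variable {n : ℕ}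

def extend (h : TreeLabelling b k n) (m : ℕ) : (Fin m → Fin b) → Fin k :=
  if hm : m < n + 1 then h ⟨m, hm⟩ else fun _ => h.root

theorem extend_of_lt (h : TreeLabelling b k n) {m : ℕ} (hm : m < n + 1) :
    h.extend m = h ⟨m, hm⟩ :=
  dif_pos hm

theorem prod_range_extend (M : Matrix (Fin k) (Fin k) ℝ) (h : TreeLabelling b k n) :
    ∏ m ∈ range n, ∏ x : Fin (m + 1) → Fin b,
      M (h.extend m (x ∘ Fin.castSucc)) (h.extend (m + 1) x) = h.weight M := by
  rw [← Fin.prod_univ_eq_prod_range]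
  refine prod_congr rfl fun m _ => prod_congr rfl fun x _ => ?_
  rw [extend_of_lt h (by omega), extend_of_lt h (by omega)]
  rfl

end TreeLabelling

theorem measurable_labelling (hmeas : ∀ n x, Measurable (ξ n x)) (n : ℕ) :
    Measurable (labelling ξ n) :=
  measurable_pi_lambda _ fun m => measurable_pi_lambda _ fun x => hmeas m x

namespace IsTreeMarkov

theorem measure_labelling_preimage (hξ : IsTreeMarkov μ ξ M pi) {n : ℕ} (h : TreeLabelling b k n) :
    μ (labelling ξ n ⁻¹' {h}) = ENNReal.ofReal (pi h.root * h.weight M) := by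
  have hset : labelling ξ n ⁻¹' {h} = {ω | ∀ m, m ≤ n → ∀ x, ξ m x ω = h.extend m x} := by
    ext ω
    simp only [Set.mem_preimage, Set.mem_singleton_iff, Set.mem_ofPred_eq]
    constructor
    · rintro rfl m hm x
      rw [extend_of_lt _ (Nat.lt_succ_of_le hm)]
      rfl
    · intro H
      funext m x
      have := H m (Nat.le_of_lt_succ m.isLt) x
      rw [extend_of_lt _ m.isLt] at this
      exact this
  rw [hset, hξ n h.extend, prod_range_extend, extend_of_lt _ n.succ_pos]
  rfl

theorem measure_root (hξ : IsTreeMarkov μ ξ M pi) (i : Fin k) :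
    μ {ω | ξ 0 Fin.elim0 ω = i} = ENNReal.ofReal (pi i) := by
  have hset : {ω | ∀ m, m ≤ 0 → ∀ x : Fin m → Fin b, ξ m x ω = i} = {ω | ξ 0 Fin.elim0 ω = i} := by
    ext ω
    refine ⟨fun H => H 0 le_rfl Fin.elim0, fun H m hm x => ?_⟩
    obtain rfl : m = 0 := Nat.le_zero.1 hm
    obtain rfl : x = Fin.elim0 := funext fun j => j.elim0
    exact H
  simpa only [hset, range_zero, prod_empty, mul_one] using hξ 0 fun _ _ => i

theorem lintegral_cond_prod_leaves (hξ : IsTreeMarkov μ ξ M pi) (hmeas : ∀ n x, Measurable (ξ n x))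
    (hM0 : ∀ i j, 0 ≤ M i j) {i : Fin k} (hpi : 0 < pi i) {f : Fin k → ℝ} (hf : 0 ≤ f) (n : ℕ) :
    ∫⁻ ω, ENNReal.ofReal (∏ y, f (ξ n y ω)) ∂μ[|{ω | ξ 0 Fin.elim0 ω = i}]
      = ENNReal.ofReal ((branchMap M b)^[n] f i) := by
  set B : Finset (TreeLabelling b k n) := univ.filter fun h => h.root = i
  have hA : {ω | ξ 0 Fin.elim0 ω = i} = labelling ξ n ⁻¹' B := by
    ext ω
    simp [B]
    rfl
  have hL := measurable_labelling hmeas n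
  have hsum : ∑ h ∈ B, ENNReal.ofReal (∏ y, f (h.leaves y)) * μ (labelling ξ n ⁻¹' {h})
      = ENNReal.ofReal (pi i) * ENNReal.ofReal (∑ h ∈ B, h.weight M * ∏ y, f (h.leaves y)) := by
    rw [ENNReal.ofReal_sum_of_nonneg fun h _ =>
      mul_nonneg (h.weight_nonneg hM0) (prod_nonneg fun y _ => hf _), mul_sum]
    refine sum_congr rfl fun h hh => ?_
    rw [hξ.measure_labelling_preimage, (mem_filter.1 hh).2, ← ENNReal.ofReal_mul (hpi.le),
      ← ENNReal.ofReal_mul (prod_nonneg fun y _ => hf _)]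
    ring_nf
  rw [← sum_weight_mul_prod_leaves_eq_iterate, ProbabilityTheory.cond, lintegral_smul_measure,
    hξ.measure_root, hA]
  have hmap := setLIntegral_map (μ := μ) (Finset.measurableSet B)
    (measurable_of_finite fun h : TreeLabelling b k n => ENNReal.ofReal (∏ y, f (h.leaves y))) hL
  simp only [lintegral_finset, Measure.map_apply hL (measurableSet_singleton _),
    leaves_labelling] at hmap
  rw [← hmap, hsum, smul_eq_mul,
    ENNReal.inv_mul_cancel_left (by simpa using hpi) ENNReal.ofReal_ne_top]

theorem lintegral_cond_exp_mul_le {ν : Fin k → ℝ} {lam c : ℝ} (hξ : IsTreeMarkov μ ξ M pi)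
    (hmeas : ∀ n x, Measurable (ξ n x))
    (hM0 : ∀ i j, 0 ≤ M i j) (hM1 : ∀ i, ∑ j, M i j = 1) (heig : M.mulVec ν = lam • ν)
    (hbl : (b : ℝ) * lam ≠ 0) (hc : 0 ≤ c)
    (hcb : c + ((1 + |lam|) * ‖ν‖) ^ 2 ≤ c * (b * lam ^ 2)) {i : Fin k} (hpi : 0 < pi i)
    (n : ℕ) (θ : ℝ) :
    ∫⁻ ω, ENNReal.ofReal (exp (θ * ((((b : ℝ) * lam) ^ n)⁻¹ * ∑ x, ν (ξ n x ω))))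
        ∂μ[|{ω | ξ 0 Fin.elim0 ω = i}]
      ≤ ENNReal.ofReal (exp (ν i * θ + c * θ ^ 2)) := by
  set u := θ * (((b : ℝ) * lam) ^ n)⁻¹
  have hu : ((b : ℝ) * lam) ^ n * u = θ := by
    simp only [u]
    field_simp
  simp only [← mul_assoc, mul_sum, exp_sum]
  rw [hξ.lintegral_cond_prod_leaves hmeas hM0 hpi (fun j => (exp_pos (u * ν j)).le) n]
  refine ENNReal.ofReal_le_ofReal ((iterate_branchMap_exp_le hM0 hM1 heig hc hcb u n i).trans_eq ?_)
  rw [hu, mul_comm]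

end IsTreeMarkov

end Markov

theorem stmt_7_general
    {Ω : Type*} [MeasurableSpace Ω] (μ : Measure Ω)
    (b k : ℕ)
    (M : Matrix (Fin k) (Fin k) ℝ) (pi : Fin k → ℝ) (lam : ℝ) (ν : Fin k → ℝ)
    (hM0 : ∀ i j, 0 ≤ M i j) (hM1 : ∀ i, ∑ j, M i j = 1)
    (hpipos : ∀ i, 0 < pi i)
    (heig : M.mulVec ν = lam • ν)
    (ξ : (n : ℕ) → (Fin n → Fin b) → Ω → Fin k)
    (hmeas : ∀ n x, Measurable (ξ n x))
    (hmarkov : ∀ n (f : (m : ℕ) → (Fin m → Fin b) → Fin k),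
      μ {ω | ∀ m, m ≤ n → ∀ x : Fin m → Fin b, ξ m x ω = f m x}
        = ENNReal.ofReal (pi (f 0 Fin.elim0) *
            ∏ m ∈ Finset.range n, ∏ x : Fin (m + 1) → Fin b,
              M (f m (x ∘ Fin.castSucc)) (f (m + 1) x)))
    (S : ℕ → Ω → ℝ)
    (hS : ∀ n ω, S n ω = (((b : ℝ) * lam) ^ n)⁻¹ * ∑ x : Fin n → Fin b, ν (ξ n x ω))
    (hKS : 1 < (b : ℝ) * lam ^ 2)
    :
    ∃ ζt : ℝ, 0 < ζt ∧ ∃ Ct : ℝ,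
      ∀ (n : ℕ) (i : Fin k) (ζ : ℝ), ζ ∈ Set.Ioo (-ζt) ζt →
        ∫⁻ ω, ENNReal.ofReal (Real.exp (ζ * (S n ω) ^ 2)) ∂(μ[|{ω | ξ 0 Fin.elim0 ω = i}])
          ≤ ENNReal.ofReal Ct := by
  have hbl : (b : ℝ) * lam ≠ 0 := fun h => by
    rw [sq, ← mul_assoc, h, zero_mul] at hKS
    exact absurd hKS zero_lt_one.not_gt
  set c := ((1 + |lam|) * ‖ν‖) ^ 2 / (b * lam ^ 2 - 1)
  have hc : 0 ≤ c := div_nonneg (sq_nonneg _) (by linarith)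
  have hcb : c + ((1 + |lam|) * ‖ν‖) ^ 2 ≤ c * (b * lam ^ 2) := by
    have : c * (b * lam ^ 2 - 1) = ((1 + |lam|) * ‖ν‖) ^ 2 := div_mul_cancel₀ _ (by linarith)
    linarith
  set K := ‖ν‖ + c + 1
  refine ⟨1 / (4 * K), by positivity, 4 * exp (K / 4), fun n i ζ hζ => ?_⟩
  have hSmeas : Measurable (S n) := by
    rw [funext (hS n)]
    exact (Finset.measurable_sum _ fun x _ => measurable_from_top.comp (hmeas n x)).const_mul _
  calc ∫⁻ ω, ENNReal.ofReal (exp (ζ * S n ω ^ 2)) ∂μ[|{ω | ξ 0 Fin.elim0 ω = i}]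
      ≤ ∫⁻ ω, ENNReal.ofReal (exp (S n ω ^ 2 / (4 * K))) ∂μ[|{ω | ξ 0 Fin.elim0 ω = i}] := by
        refine lintegral_mono fun ω => ENNReal.ofReal_le_ofReal (exp_le_exp.2 ?_)
        rw [div_eq_mul_one_div, mul_comm]
        exact mul_le_mul_of_nonneg_left hζ.2.le (sq_nonneg _)
    _ ≤ ENNReal.ofReal (4 * exp (K / 4)) := by
        refine lintegral_exp_sq_div_le_of_mgf hSmeas (norm_nonneg ν) hc le_rfl fun θ => ?_
        have hνθ : ν i * θ ≤ ‖ν‖ * |θ| := calc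
          ν i * θ ≤ |ν i| * |θ| := (le_abs_self _).trans (abs_mul _ _).le
          _ ≤ ‖ν‖ * |θ| := by gcongr; exact norm_le_pi_norm ν i
        simp only [hS]
        exact (IsTreeMarkov.lintegral_cond_exp_mul_le hmarkov hmeas hM0 hM1 heig hbl hc hcb
          (hpipos i) n θ).trans (ENNReal.ofReal_le_ofReal (exp_le_exp.2 (by linarith)))

theorem stmt_7
    {Ω : Type*} [MeasurableSpace Ω] (μ : Measure Ω) [IsProbabilityMeasure μ]
    (b k : ℕ) (hb : 2 ≤ b) (hk : 2 ≤ k)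
    (M : Matrix (Fin k) (Fin k) ℝ) (pi : Fin k → ℝ) (lam : ℝ) (ν : Fin k → ℝ)
    (hM0 : ∀ i j, 0 ≤ M i j) (hM1 : ∀ i, ∑ j, M i j = 1)
    (hMirr : ∀ i j, ∃ n : ℕ, 0 < (M ^ n) i j)
    (hpipos : ∀ i, 0 < pi i) (hpisum : ∑ i, pi i = 1)
    (hpistat : ∀ j, ∑ i, pi i * M i j = pi j)
    (heig : M.mulVec ν = lam • ν) (hν0 : ν ≠ 0)
    (hνnorm : ∑ i, pi i * ν i ^ 2 = 1)
    (hsecond : ∀ lam' : ℝ, lam' ≠ 1 →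
      (∃ w : Fin k → ℝ, w ≠ 0 ∧ M.mulVec w = lam' • w) → |lam'| ≤ |lam|)
    (ξ : (n : ℕ) → (Fin n → Fin b) → Ω → Fin k)
    (hmeas : ∀ n x, Measurable (ξ n x))
    (hmarkov : ∀ n (f : (m : ℕ) → (Fin m → Fin b) → Fin k),
      μ {ω | ∀ m, m ≤ n → ∀ x : Fin m → Fin b, ξ m x ω = f m x}
        = ENNReal.ofReal (pi (f 0 Fin.elim0) *
            ∏ m ∈ Finset.range n, ∏ x : Fin (m + 1) → Fin b,
              M (f m (x ∘ Fin.castSucc)) (f (m + 1) x)))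
    (S : ℕ → Ω → ℝ)
    (hS : ∀ n ω, S n ω = (((b : ℝ) * lam) ^ n)⁻¹ * ∑ x : Fin n → Fin b, ν (ξ n x ω))
    (hKS : 1 < (b : ℝ) * lam ^ 2)
    :
    ∃ ζt : ℝ, 0 < ζt ∧ ∃ Ct : ℝ,
      ∀ (n : ℕ) (i : Fin k) (ζ : ℝ), ζ ∈ Set.Ioo (-ζt) ζt →
        ∫⁻ ω, ENNReal.ofReal (Real.exp (ζ * (S n ω) ^ 2)) ∂(μ[|{ω | ξ 0 Fin.elim0 ω = i}])
          ≤ ENNReal.ofReal Ct :=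
  stmt_7_general μ b k M pi lam ν hM0 hM1 hpipos heig ξ hmeas hmarkov S hS hKS
end
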